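/- arXiv:1905.00938 — 7 statements merged into one kernel-verified Lean document; each statement's English description precedes it below -/
import Mathlib

section
/- If four elements a₀, a₁, a₂, a₃ of a group satisfy aᵢ aᵢ₊₁ aᵢ⁻¹ = aᵢ₊₁² (indices mod 4) and each aᵢ has finite order, then all four elements equal the identity. -/
set_option maxHeartbeats 1000000

lemma higman_aux {G : Type*} [Group G] (x y : G) (h : x * y * x⁻¹ = y ^ 2)
    (hx : IsOfFinOrder x) : orderOf y ∣ 2 ^ orderOf x - 1 := by
  have key : ∀ n : ℕ, x ^ n * y * (x ^ n)⁻¹ = y ^ 2 ^ n := by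
    intro n
    induction n with
    | zero => simp
    | succ n ih =>
      have e : x ^ (n + 1) * y * (x ^ (n + 1))⁻¹ = x * (x ^ n * y * (x ^ n)⁻¹) * x⁻¹ := by
        group
      rw [e, ih, ← conj_pow, h, ← pow_mul, pow_succ, Nat.mul_comm]
  have h1 : y ^ 2 ^ orderOf x = y := by
    have := key (orderOf x)
    rw [pow_orderOf_eq_one x] at this
    simpa using this.symm
  have hle : 1 ≤ 2 ^ orderOf x := Nat.one_le_two_pow
  have h2 : y ^ (2 ^ orderOf x - 1) * y = 1 * y := by
    rw [← pow_succ, Nat.sub_add_cancel hle, h1, one_mul]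
  exact orderOf_dvd_of_pow_eq_one (mul_right_cancel h2)

theorem higman_finite_order_trivial {G : Type*} [Group G] (a : ZMod 4 → G)
    (hrel : ∀ i : ZMod 4, a i * a (i + 1) * (a i)⁻¹ = (a (i + 1)) ^ 2)
    (hfin : ∀ i : ZMod 4, IsOfFinOrder (a i)) :
    ∀ i : ZMod 4, a i = 1 := by
  by_contra hcon
  push_neg at hcon
  obtain ⟨i0, hi0⟩ := hcon
  -- if some a j = 1 then all are 1
  have step : ∀ j : ZMod 4, a j = 1 → a (j + 1) = 1 := by
    intro j hj
    have := hrel j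
    rw [hj, one_mul, inv_one, mul_one, pow_two] at this
    have : a (j + 1) * 1 = a (j + 1) * a (j + 1) := by rw [mul_one]; exact this
    exact (mul_left_cancel this).symm
  have hne : ∀ j : ZMod 4, a j ≠ 1 := by
    intro j hj
    have h1 := step j hj
    have h2 := step _ h1
    have h3 := step _ h2
    have h4 := step _ h3
    have cases4 : ∀ i j : ZMod 4, i = j ∨ i = j + 1 ∨ i = j + 1 + 1 ∨ i = j + 1 + 1 + 1 := by
      decide
    rcases cases4 i0 j with h | h | h | h <;> rw [h] at hi0 <;>
      [exact hi0 hj; exact hi0 h1; exact hi0 h2; exact hi0 h3]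
  have hord : ∀ j : ZMod 4, orderOf (a j) ≠ 1 := fun j h =>
    hne j (orderOf_eq_one_iff.mp h)
  have hordpos : ∀ j : ZMod 4, 0 < orderOf (a j) := fun j => (hfin j).orderOf_pos
  have hdiv : ∀ j : ZMod 4, orderOf (a (j + 1)) ∣ 2 ^ orderOf (a j) - 1 :=
    fun j => higman_aux _ _ (hrel j) (hfin j)
  -- pick j minimizing minFac of order
  obtain ⟨j, -, hj⟩ := Finset.exists_min_image Finset.univ
    (fun i => Nat.minFac (orderOf (a i))) ⟨0, Finset.mem_univ 0⟩
  set k := j - 1 with hk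
  have hkj : k + 1 = j := by rw [hk]; ring
  set q := Nat.minFac (orderOf (a j)) with hqdef
  have hqp : q.Prime := Nat.minFac_prime (hord j)
  haveI : Fact q.Prime := ⟨hqp⟩
  set n := orderOf (a k) with hn
  have hnpos : 0 < n := hordpos k
  have hqdvd : q ∣ 2 ^ n - 1 := dvd_trans (Nat.minFac_dvd _) (hkj ▸ hdiv k)
  have hle : 1 ≤ 2 ^ n := Nat.one_le_two_pow
  have h2n : (2 : ZMod q) ^ n = 1 := by
    have h0 : ((2 ^ n - 1 : ℕ) : ZMod q) = 0 := by
      rw [ZMod.natCast_eq_zero_iff]; exact hqdvd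
    rw [Nat.cast_sub hle] at h0
    push_cast at h0
    linear_combination h0
  have h2ne : (2 : ZMod q) ≠ 0 := by
    intro h
    have : ((2 : ℕ) : ZMod q) = 0 := by push_cast; exact h
    have hq2 : q ∣ 2 := (ZMod.natCast_eq_zero_iff 2 q).mp this
    have : q = 2 := (Nat.prime_dvd_prime_iff_eq hqp Nat.prime_two).mp hq2
    rw [this] at hqdvd
    have : (2 : ℕ) ∣ 1 := by
      have h2p : (2:ℕ) ∣ 2 ^ n := dvd_pow_self 2 hnpos.ne'
      have := Nat.dvd_sub h2p hqdvd
      simpa [Nat.sub_sub_self hle] using this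
    omega
  have h2q1 : (2 : ZMod q) ^ (q - 1) = 1 := ZMod.pow_card_sub_one_eq_one h2ne
  set d := orderOf (2 : ZMod q) with hd
  have hdn : d ∣ n := orderOf_dvd_of_pow_eq_one h2n
  have hdq : d ∣ q - 1 := orderOf_dvd_of_pow_eq_one h2q1
  have hdne : d ≠ 1 := by
    intro h
    have h21 : (2 : ZMod q) = 1 := orderOf_eq_one_iff.mp h
    have : ((2 : ℕ) : ZMod q) = ((1 : ℕ) : ZMod q) := by push_cast; exact h21
    have hmod := (ZMod.natCast_eq_natCast_iff 2 1 q).mp this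
    have := (Nat.modEq_iff_dvd' (by norm_num)).mp hmod.symm
    have := Nat.le_of_dvd (by norm_num) this
    exact absurd (le_trans hqp.two_le this) (by norm_num)
  have hdpos : 0 < d := by
    rcases Nat.eq_zero_or_pos d with h | h
    · rw [h] at hdq
      have := Nat.eq_zero_of_zero_dvd hdq
      have := hqp.two_le
      omega
    · exact h
  set p := Nat.minFac d with hp
  have hpp : p.Prime := Nat.minFac_prime hdne
  have hpn : p ∣ n := dvd_trans (Nat.minFac_dvd d) hdn
  have h1 : Nat.minFac n ≤ p := Nat.minFac_le_of_dvd hpp.two_le hpn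
  have h2 : p ≤ d := Nat.minFac_le hdpos
  have h3 : d ≤ q - 1 := Nat.le_of_dvd (by have := hqp.two_le; omega) hdq
  have h4 : q ≤ Nat.minFac n := hj k (Finset.mem_univ k)
  have := hqp.two_le
  omega
end

section
/- Every orientation-preserving homeomorphism of the real line admits a square root: there exists an orientation-preserving homeomorphism g with g ∘ g = f. -/
/-!
Fixed points of `f` are left in place. Every order-connected component `I` of the complement of
the fixed points is mapped onto itself by `f`, and by the intermediate value theorem either
`x < f x` on all of `I` or `f x < x` on all of `I`; in the second case, if `g` is a square root of
`f⁻¹` on `I`, then `g ∘ f` is one of `f`. When `x < f x` on `I`, pick `c ∈ I`: the translates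
`fⁿ [c, f c)`, `n ∈ ℤ`, tile `I`. With `e = (f c - c) / 2`, the map sending `[c, c + e)` to
`[c + e, f c)` by `t ↦ t + e` and `[c + e, f c)` to `[f c, f (c + e))` by `t ↦ f (t - e)`
squares to `f`, and it extends to `I` by commuting with `f`. Gluing these square roots with the
identity on the fixed points keeps the map increasing, since each component lies strictly on one
side of every fixed point.
-/

open Set Function
open scoped Interval

section IsSqrtOn

variable {α : Type*} [Preorder α]

structure IsSqrtOn (f : α → α) (I : Set α) (g : α → α) : Prop where
  mapsTo : MapsTo g I I
  strictMonoOn : StrictMonoOn g I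
  apply_apply : ∀ x ∈ I, g (g x) = f x

lemma IsSqrtOn.comp_of_symm {φ : α ≃o α} {I : Set α} {g : α → α}
    (hg : IsSqrtOn φ.symm I g) (hφ : MapsTo φ I I) : IsSqrtOn φ I (g ∘ φ) := by
  have hcomm : ∀ x ∈ I, g (φ x) = φ (g x) := by
    intro x hx
    have h := hg.apply_apply (g (φ x)) (hg.mapsTo (hφ hx))
    rw [hg.apply_apply _ (hφ hx), φ.symm_apply_apply] at h
    rw [h, φ.apply_symm_apply]
  refine ⟨hg.mapsTo.comp hφ, hg.strictMonoOn.comp (φ.strictMono.strictMonoOn I) hφ,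
    fun x hx => ?_⟩
  rw [comp_apply, comp_apply, ← hcomm _ (hφ hx), hg.apply_apply _ (hφ (hφ hx)),
    φ.symm_apply_apply]

end IsSqrtOn

lemma Monotone.exists_mem_Ico_add_one {α : Type*} [LinearOrder α] {u : ℤ → α}
    (hu : Monotone u) {x : α} (hlo : ∃ m, u m ≤ x) (hhi : ∃ M, x < u M) :
    ∃ n, x ∈ Ico (u n) (u (n + 1)) := by
  obtain ⟨M, hM⟩ := hhi
  have hbdd : ∃ b, ∀ n, u n ≤ x → n ≤ b :=
    ⟨M, fun n hn => le_of_lt (lt_of_not_ge fun h => (hM.trans_le (hu h)).not_ge hn)⟩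
  obtain ⟨n, hn, hmax⟩ := Int.exists_greatest_of_bdd hbdd hlo
  exact ⟨n, hn, lt_of_not_ge fun h => (hmax (n + 1) h).not_gt (lt_add_one n)⟩

lemma Monotone.eq_of_mem_Ico_add_one {α : Type*} [LinearOrder α] {u : ℤ → α}
    (hu : Monotone u) {x : α} {m n : ℤ} (hm : x ∈ Ico (u m) (u (m + 1)))
    (hn : x ∈ Ico (u n) (u (n + 1))) : m = n := by
  rcases lt_trichotomy m n with h | h | h
  · exact absurd (hu (Int.add_one_le_of_lt h)) (hn.1.trans_lt hm.2).not_ge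
  · exact h
  · exact absurd (hu (Int.add_one_le_of_lt h)) (hm.1.trans_lt hn.2).not_ge

lemma forall_lt_or_forall_gt_of_forall_not_isFixedPt {α : Type*}
    [ConditionallyCompleteLinearOrder α] [TopologicalSpace α] [OrderTopology α]
    [DenselyOrdered α] {f : α → α} (hf : Continuous f) {I : Set α} [I.OrdConnected]
    (hI : ∀ x ∈ I, ¬IsFixedPt f x) : (∀ x ∈ I, x < f x) ∨ (∀ x ∈ I, f x < x) := by
  by_contra! h
  obtain ⟨⟨a, haI, ha⟩, ⟨b, hbI, hb⟩⟩ := h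
  obtain ⟨z, hz, hfz⟩ := exists_mem_uIcc_isFixedPt hf.continuousOn hb ha
  exact hI z (Set.OrdConnected.uIcc_subset ‹_› hbI haI hz) hfz

lemma Set.ordConnectedComponent_subset_Iio {α : Type*} [LinearOrder α] {s : Set α} {x q : α}
    (hq : q ∉ s) (hxq : x < q) : ordConnectedComponent s x ⊆ Iio q :=
  fun _ hy => lt_of_not_ge fun hqy => hq (hy (mem_uIcc_of_le hxq.le hqy))

lemma Set.ordConnectedComponent_subset_Ioi {α : Type*} [LinearOrder α] {s : Set α} {x q : α}
    (hq : q ∉ s) (hqx : q < x) : ordConnectedComponent s x ⊆ Ioi q :=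
  fun _ hy => lt_of_not_ge fun hyq => hq (hy (mem_uIcc_of_ge hyq hqx.le))

namespace OrderIso

variable {α : Type*}

section Preorder

variable [Preorder α] (φ : α ≃o α)

lemma zpow_apply_zpow_apply (m n : ℤ) (x : α) : (φ ^ m) ((φ ^ n) x) = (φ ^ (m + n)) x := by
  rw [zpow_add, RelIso.mul_apply]

lemma zpow_add_one_apply (n : ℤ) (x : α) : (φ ^ (n + 1)) x = (φ ^ n) (φ x) := by
  rw [zpow_add_one, RelIso.mul_apply]

lemma zpow_apply_comm (n : ℤ) (x : α) : (φ ^ n) (φ x) = φ ((φ ^ n) x) := by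
  rw [← RelIso.mul_apply, ← RelIso.mul_apply, (Commute.self_zpow φ n).eq]

lemma mapsTo_zpow {I : Set α} (hφ : MapsTo φ I I) (hφ' : MapsTo φ.symm I I) (n : ℤ) :
    MapsTo (φ ^ n) I I := by
  induction n using Int.induction_on with
  | zero => simpa using mapsTo_id I
  | succ n ih => rw [zpow_add_one]; exact ih.comp hφ
  | pred n ih => rw [zpow_sub_one]; exact ih.comp hφ'

lemma strictMono_zpow_apply {c : α} (hc : c < φ c) : StrictMono fun n : ℤ => (φ ^ n) c :=
  strictMono_int_of_lt_succ fun n => by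
    simpa only [zpow_add_one_apply] using (φ ^ n).strictMono hc

lemma zpow_apply_mem_Ico {c t : α} (ht : t ∈ Ico c (φ c)) (n : ℤ) :
    (φ ^ n) t ∈ Ico ((φ ^ n) c) ((φ ^ (n + 1)) c) := by
  rw [zpow_add_one_apply, ← image_Ico]
  exact mem_image_of_mem _ ht

lemma image_range_zpow_apply (c : α) :
    φ '' range (fun n : ℤ => (φ ^ n) c) = range (fun n : ℤ => (φ ^ n) c) := by
  rw [← range_comp,
    ← (Equiv.addRight (1 : ℤ)).surjective.range_comp (fun n : ℤ => (φ ^ n) c)]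
  congr 1
  ext n
  simp only [comp_apply, Equiv.coe_addRight, zpow_add_one_apply, zpow_apply_comm]

end Preorder

lemma isFixedPt_sInf_range_zpow_apply [ConditionallyCompleteLattice α] (φ : α ≃o α) {c : α}
    (h : BddBelow (range fun n : ℤ => (φ ^ n) c)) :
    IsFixedPt φ (sInf (range fun n : ℤ => (φ ^ n) c)) := by
  rw [IsFixedPt, φ.map_csInf' (range_nonempty _) h, image_range_zpow_apply]

lemma isFixedPt_sSup_range_zpow_apply [ConditionallyCompleteLattice α] (φ : α ≃o α) {c : α}
    (h : BddAbove (range fun n : ℤ => (φ ^ n) c)) :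
    IsFixedPt φ (sSup (range fun n : ℤ => (φ ^ n) c)) := by
  rw [IsFixedPt, φ.map_csSup' (range_nonempty _) h, image_range_zpow_apply]

section LinearOrder

variable [LinearOrder α] (φ : α ≃o α)

lemma uIcc_subset_compl_fixedPoints {x : α} (hx : ¬IsFixedPt φ x) :
    [[x, φ x]] ⊆ (fixedPoints φ)ᶜ := by
  intro z hz hfz
  have hzx : z = φ x := by
    rcases mem_uIcc.1 hz with ⟨h1, h2⟩ | ⟨h1, h2⟩
    · exact le_antisymm h2 ((φ.monotone h1).trans_eq hfz)
    · exact le_antisymm (hfz.symm.trans_le (φ.monotone h2)) h1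
  subst hzx
  exact hx (φ.injective hfz)

lemma mapsTo_ordConnectedComponent_compl_fixedPoints (x : α) :
    MapsTo φ (ordConnectedComponent (fixedPoints φ)ᶜ x)
      (ordConnectedComponent (fixedPoints φ)ᶜ x) := by
  intro y hy
  have hx : ¬IsFixedPt φ x := hy left_mem_uIcc
  have himage : [[φ x, φ y]] ⊆ (fixedPoints φ)ᶜ := by
    intro z hz hfz
    have hz' := φ.symm.monotone.mapsTo_uIcc hz
    rw [φ.symm_apply_apply, φ.symm_apply_apply, φ.symm_apply_eq.2 hfz.symm] at hz'
    exact hy hz' hfz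
  exact mem_ordConnectedComponent_trans (φ.uIcc_subset_compl_fixedPoints hx) himage

end LinearOrder

end OrderIso

section Rising

variable (φ : ℝ ≃o ℝ) (c : ℝ)

noncomputable def halfStep (t : ℝ) : ℝ :=
  if t < c + (φ c - c) / 2 then t + (φ c - c) / 2 else φ (t - (φ c - c) / 2)

noncomputable def orbitIndex (x : ℝ) : ℤ :=
  Classical.epsilon fun n : ℤ => (φ ^ (-n)) x ∈ Ico c (φ c)

noncomputable def orbitSqrt (x : ℝ) : ℝ :=
  (φ ^ orbitIndex φ c x) (halfStep φ c ((φ ^ (-orbitIndex φ c x)) x))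

variable {φ c}

lemma halfStep_of_lt {t : ℝ} (ht : t < c + (φ c - c) / 2) :
    halfStep φ c t = t + (φ c - c) / 2 :=
  if_pos ht

lemma halfStep_of_le {t : ℝ} (ht : c + (φ c - c) / 2 ≤ t) :
    halfStep φ c t = φ (t - (φ c - c) / 2) :=
  if_neg ht.not_gt

lemma halfStep_mem_Ico (hc : c < φ c) {t : ℝ} (ht : t ∈ Ico c (φ c)) :
    halfStep φ c t ∈ Ico (c + (φ c - c) / 2) (φ (c + (φ c - c) / 2)) := by
  obtain ⟨htc, htφ⟩ := ht
  rcases lt_or_ge t (c + (φ c - c) / 2) with h | h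
  · rw [halfStep_of_lt h]
    exact ⟨by linarith, by linarith [φ.strictMono (show c < c + (φ c - c) / 2 by linarith)]⟩
  · rw [halfStep_of_le h]
    exact ⟨by linarith [φ.monotone (show c ≤ t - (φ c - c) / 2 by linarith)],
      φ.strictMono (by linarith)⟩

lemma strictMonoOn_halfStep : StrictMonoOn (halfStep φ c) (Ico c (φ c)) := by
  intro s hs t ht hst
  rcases lt_or_ge t (c + (φ c - c) / 2) with htm | htm
  · rw [halfStep_of_lt (hst.trans htm), halfStep_of_lt htm]
    linarith
  rcases lt_or_ge s (c + (φ c - c) / 2) with hsm | hsm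
  · rw [halfStep_of_lt hsm, halfStep_of_le htm]
    linarith [φ.monotone (show c ≤ t - (φ c - c) / 2 by linarith)]
  · rw [halfStep_of_le hsm, halfStep_of_le htm]
    exact φ.strictMono (by linarith)

lemma orbitIndex_zpow_apply (hc : c < φ c) {t : ℝ} (ht : t ∈ Ico c (φ c)) (n : ℤ) :
    orbitIndex φ c ((φ ^ n) t) = n := by
  set k := orbitIndex φ c ((φ ^ n) t)
  have hk : (φ ^ (-k)) ((φ ^ n) t) ∈ Ico c (φ c) :=
    Classical.epsilon_spec (p := fun k : ℤ => (φ ^ (-k)) ((φ ^ n) t) ∈ Ico c (φ c))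
      ⟨n, by simpa [OrderIso.zpow_apply_zpow_apply] using ht⟩
  refine (φ.strictMono_zpow_apply hc).monotone.eq_of_mem_Ico_add_one ?_
    (φ.zpow_apply_mem_Ico ht n)
  simpa only [OrderIso.zpow_apply_zpow_apply, add_neg_cancel_left]
    using φ.zpow_apply_mem_Ico hk k

lemma orbitSqrt_zpow_apply (hc : c < φ c) {t : ℝ} (ht : t ∈ Ico c (φ c)) (n : ℤ) :
    orbitSqrt φ c ((φ ^ n) t) = (φ ^ n) (halfStep φ c t) := by
  simp [orbitSqrt, orbitIndex_zpow_apply hc ht]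

lemma orbitSqrt_orbitSqrt_zpow_apply (hc : c < φ c) {t : ℝ} (ht : t ∈ Ico c (φ c)) (n : ℤ) :
    orbitSqrt φ c (orbitSqrt φ c ((φ ^ n) t)) = φ ((φ ^ n) t) := by
  rw [orbitSqrt_zpow_apply hc ht]
  rcases lt_or_ge t (c + (φ c - c) / 2) with h | h
  · have ht' : t + (φ c - c) / 2 ∈ Ico c (φ c) := ⟨by linarith [ht.1], by linarith⟩
    rw [halfStep_of_lt h, orbitSqrt_zpow_apply hc ht', halfStep_of_le (by linarith [ht.1]),
      add_sub_cancel_right, OrderIso.zpow_apply_comm]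
  · have ht' : t - (φ c - c) / 2 ∈ Ico c (φ c) := ⟨by linarith, by linarith [ht.2]⟩
    rw [halfStep_of_le h, ← OrderIso.zpow_add_one_apply, orbitSqrt_zpow_apply hc ht',
      halfStep_of_lt (by linarith [ht.2]), sub_add_cancel, OrderIso.zpow_add_one_apply,
      OrderIso.zpow_apply_comm]

lemma orbitSqrt_lt_orbitSqrt (hc : c < φ c) {s t : ℝ} (hs : s ∈ Ico c (φ c))
    (ht : t ∈ Ico c (φ c)) {m n : ℤ} (h : (φ ^ m) s < (φ ^ n) t) :
    orbitSqrt φ c ((φ ^ m) s) < orbitSqrt φ c ((φ ^ n) t) := by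
  rw [orbitSqrt_zpow_apply hc hs, orbitSqrt_zpow_apply hc ht]
  have hd : c + (φ c - c) / 2 < φ (c + (φ c - c) / 2) := by
    linarith [φ.strictMono (show c < c + (φ c - c) / 2 by linarith)]
  set d := c + (φ c - c) / 2
  rcases lt_trichotomy m n with hmn | rfl | hmn
  · calc (φ ^ m) (halfStep φ c s)
        < (φ ^ m) (φ d) := (φ ^ m).strictMono (halfStep_mem_Ico hc hs).2
      _ = (φ ^ (m + 1)) d := (φ.zpow_add_one_apply m d).symm
      _ ≤ (φ ^ n) d := (φ.strictMono_zpow_apply hd).monotone (Int.add_one_le_of_lt hmn)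
      _ ≤ (φ ^ n) (halfStep φ c t) := (φ ^ n).monotone (halfStep_mem_Ico hc ht).1
  · exact (φ ^ m).strictMono (strictMonoOn_halfStep hs ht ((φ ^ m).lt_iff_lt.mp h))
  · refine absurd h (not_lt.mpr ?_)
    calc (φ ^ n) t ≤ (φ ^ (n + 1)) c := (φ.zpow_apply_mem_Ico ht n).2.le
      _ ≤ (φ ^ m) c := (φ.strictMono_zpow_apply hc).monotone (Int.add_one_le_of_lt hmn)
      _ ≤ (φ ^ m) s := (φ ^ m).monotone hs.1

lemma exists_zpow_apply_eq (hc : c < φ c) {I : Set ℝ} [I.OrdConnected]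
    (hI : ∀ y ∈ I, ¬IsFixedPt φ y) (hcI : c ∈ I) {x : ℝ} (hx : x ∈ I) :
    ∃ n : ℤ, ∃ t ∈ Ico c (φ c), (φ ^ n) t = x := by
  have hc₀ : c ∈ range fun n : ℤ => (φ ^ n) c := ⟨0, by simp⟩
  have hlo : ∃ m : ℤ, (φ ^ m) c ≤ x := by
    by_contra! h
    have hb : BddBelow (range fun n : ℤ => (φ ^ n) c) :=
      ⟨x, forall_mem_range.2 fun n => (h n).le⟩
    refine hI _ (Set.OrdConnected.out ‹_› hx hcI ⟨?_, csInf_le hb hc₀⟩)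
      (φ.isFixedPt_sInf_range_zpow_apply hb)
    exact le_csInf ⟨c, hc₀⟩ (forall_mem_range.2 fun n => (h n).le)
  have hhi : ∃ m : ℤ, x < (φ ^ m) c := by
    by_contra! h
    have hb : BddAbove (range fun n : ℤ => (φ ^ n) c) := ⟨x, forall_mem_range.2 h⟩
    refine hI _ (Set.OrdConnected.out ‹_› hcI hx ⟨le_csSup hb hc₀, ?_⟩)
      (φ.isFixedPt_sSup_range_zpow_apply hb)
    exact csSup_le ⟨c, hc₀⟩ (forall_mem_range.2 h)
  obtain ⟨n, hn⟩ := (φ.strictMono_zpow_apply hc).monotone.exists_mem_Ico_add_one hlo hhi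
  rw [OrderIso.zpow_add_one_apply, ← OrderIso.image_Ico] at hn
  obtain ⟨t, ht, rfl⟩ := hn
  exact ⟨n, t, ht, rfl⟩

lemma exists_isSqrtOn_of_forall_lt {I : Set ℝ} [I.OrdConnected] (hφ : MapsTo φ I I)
    (hφ' : MapsTo φ.symm I I) (hI : ∀ x ∈ I, x < φ x) : ∃ g, IsSqrtOn φ I g := by
  rcases I.eq_empty_or_nonempty with rfl | ⟨c, hcI⟩
  · exact ⟨id, mapsTo_empty _ _, fun _ h => h.elim, fun _ h => h.elim⟩
  have hc := hI c hcI
  have hrep : ∀ x ∈ I, ∃ n : ℤ, ∃ t ∈ Ico c (φ c), (φ ^ n) t = x :=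
    fun x hx => exists_zpow_apply_eq hc (fun y hy => (hI y hy).ne') hcI hx
  refine ⟨orbitSqrt φ c, ⟨?_, ?_, ?_⟩⟩
  · intro x hx
    obtain ⟨n, t, ht, rfl⟩ := hrep x hx
    have hmem := halfStep_mem_Ico hc ht
    have hle : φ (c + (φ c - c) / 2) ≤ φ (φ c) := φ.monotone (by linarith)
    rw [orbitSqrt_zpow_apply hc ht]
    refine φ.mapsTo_zpow hφ hφ' n (Set.OrdConnected.out ‹_› hcI (hφ (hφ hcI)) ⟨?_, ?_⟩)
    · linarith [hmem.1]
    · linarith [hmem.2]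
  · intro x hx y hy hxy
    obtain ⟨m, s, hs, rfl⟩ := hrep x hx
    obtain ⟨n, t, ht, rfl⟩ := hrep y hy
    exact orbitSqrt_lt_orbitSqrt hc hs ht hxy
  · intro x hx
    obtain ⟨n, t, ht, rfl⟩ := hrep x hx
    exact orbitSqrt_orbitSqrt_zpow_apply hc ht n

end Rising

lemma exists_isSqrtOn (φ : ℝ ≃o ℝ) {I : Set ℝ} [I.OrdConnected] (hφ : MapsTo φ I I)
    (hφ' : MapsTo φ.symm I I) (hI : ∀ x ∈ I, ¬IsFixedPt φ x) : ∃ g, IsSqrtOn φ I g := by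
  rcases forall_lt_or_forall_gt_of_forall_not_isFixedPt φ.continuous hI with h | h
  · exact exists_isSqrtOn_of_forall_lt hφ hφ' h
  · obtain ⟨g, hg⟩ := exists_isSqrtOn_of_forall_lt (φ := φ.symm) hφ' hφ
      fun x hx => φ.lt_symm_apply.2 (h x hx)
    exact ⟨g ∘ φ, hg.comp_of_symm hφ⟩

section HomeoSqrt

variable (φ : ℝ ≃o ℝ)

open Classical in
/-- `Classical.epsilon` makes the square root chosen on a component depend on the component
only. -/
noncomputable def homeoSqrt (x : ℝ) : ℝ :=
  if IsFixedPt φ x then x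
  else Classical.epsilon (IsSqrtOn φ (ordConnectedComponent (fixedPoints φ)ᶜ x)) x

lemma exists_isSqrtOn_ordConnectedComponent (x : ℝ) :
    ∃ g, IsSqrtOn φ (ordConnectedComponent (fixedPoints φ)ᶜ x) g := by
  have hsymm : fixedPoints φ.symm = fixedPoints φ := by
    ext y
    exact IsFixedPt.equiv_symm_iff (e := φ.toEquiv)
  refine exists_isSqrtOn φ (φ.mapsTo_ordConnectedComponent_compl_fixedPoints x) ?_
    fun y hy => ordConnectedComponent_subset hy
  simpa only [hsymm] using φ.symm.mapsTo_ordConnectedComponent_compl_fixedPoints x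

lemma homeoSqrt_of_isFixedPt {x : ℝ} (hx : IsFixedPt φ x) : homeoSqrt φ x = x := if_pos hx

lemma homeoSqrt_of_mem {x y : ℝ} (hy : y ∈ ordConnectedComponent (fixedPoints φ)ᶜ x) :
    homeoSqrt φ y =
      Classical.epsilon (IsSqrtOn φ (ordConnectedComponent (fixedPoints φ)ᶜ x)) y := by
  rw [homeoSqrt, if_neg (show ¬IsFixedPt φ y from ordConnectedComponent_subset hy),
    ordConnectedComponent_eq hy]

lemma homeoSqrt_mem {x : ℝ} (hx : ¬IsFixedPt φ x) :
    homeoSqrt φ x ∈ ordConnectedComponent (fixedPoints φ)ᶜ x := by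
  have hmem : x ∈ ordConnectedComponent (fixedPoints φ)ᶜ x :=
    self_mem_ordConnectedComponent.2 hx
  rw [homeoSqrt_of_mem φ hmem]
  exact (Classical.epsilon_spec (exists_isSqrtOn_ordConnectedComponent φ x)).mapsTo hmem

lemma homeoSqrt_homeoSqrt (x : ℝ) : homeoSqrt φ (homeoSqrt φ x) = φ x := by
  by_cases hx : IsFixedPt φ x
  · rw [homeoSqrt_of_isFixedPt φ hx, homeoSqrt_of_isFixedPt φ hx, hx.eq]
  have hmem : x ∈ ordConnectedComponent (fixedPoints φ)ᶜ x :=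
    self_mem_ordConnectedComponent.2 hx
  have hg := Classical.epsilon_spec (exists_isSqrtOn_ordConnectedComponent φ x)
  rw [homeoSqrt_of_mem φ hmem, homeoSqrt_of_mem φ (hg.mapsTo hmem), hg.apply_apply x hmem]

lemma homeoSqrt_lt_of_lt_isFixedPt {x q : ℝ} (hq : IsFixedPt φ q) (h : x < q) :
    homeoSqrt φ x < q := by
  by_cases hx : IsFixedPt φ x
  · rwa [homeoSqrt_of_isFixedPt φ hx]
  · exact ordConnectedComponent_subset_Iio (s := (fixedPoints φ)ᶜ) (notMem_compl_iff.2 hq) h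
      (homeoSqrt_mem φ hx)

lemma lt_homeoSqrt_of_isFixedPt_lt {x q : ℝ} (hq : IsFixedPt φ q) (h : q < x) :
    q < homeoSqrt φ x := by
  by_cases hx : IsFixedPt φ x
  · rwa [homeoSqrt_of_isFixedPt φ hx]
  · exact ordConnectedComponent_subset_Ioi (s := (fixedPoints φ)ᶜ) (notMem_compl_iff.2 hq) h
      (homeoSqrt_mem φ hx)

lemma strictMono_homeoSqrt : StrictMono (homeoSqrt φ) := by
  intro x y hxy
  by_cases hx : IsFixedPt φ x
  · rw [homeoSqrt_of_isFixedPt φ hx]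
    exact lt_homeoSqrt_of_isFixedPt_lt φ hx hxy
  by_cases hy : IsFixedPt φ y
  · rw [homeoSqrt_of_isFixedPt φ hy]
    exact homeoSqrt_lt_of_lt_isFixedPt φ hy hxy
  by_cases hxy' : y ∈ ordConnectedComponent (fixedPoints φ)ᶜ x
  · have hmem : x ∈ ordConnectedComponent (fixedPoints φ)ᶜ x :=
      self_mem_ordConnectedComponent.2 hx
    rw [homeoSqrt_of_mem φ hmem, homeoSqrt_of_mem φ hxy']
    exact (Classical.epsilon_spec (exists_isSqrtOn_ordConnectedComponent φ x)).strictMonoOn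
      hmem hxy' hxy
  obtain ⟨q, hq, hfq⟩ : ∃ q ∈ Icc x y, IsFixedPt φ q := by
    by_contra! h
    exact hxy' fun q hq => h q (uIcc_of_le hxy.le ▸ hq)
  have hxq : x < q := hq.1.lt_of_ne fun h => hx (h ▸ hfq)
  have hqy : q < y := hq.2.lt_of_ne fun h => hy (h ▸ hfq)
  exact (homeoSqrt_lt_of_lt_isFixedPt φ hfq hxq).trans (lt_homeoSqrt_of_isFixedPt_lt φ hfq hqy)

end HomeoSqrt

theorem homeo_has_square_root (f : ℝ → ℝ)
    (hmono : StrictMono f) (hbij : Function.Bijective f) :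
    ∃ g : ℝ → ℝ, StrictMono g ∧ Function.Bijective g ∧ g ∘ g = f := by
  let φ := hmono.orderIsoOfSurjective f hbij.2
  have hsq : homeoSqrt φ ∘ homeoSqrt φ = f := funext (homeoSqrt_homeoSqrt φ)
  exact ⟨homeoSqrt φ, strictMono_homeoSqrt φ,
    ⟨(strictMono_homeoSqrt φ).injective, Surjective.of_comp (hsq ▸ hbij.2)⟩, hsq⟩
end

section
/- Let f be a homeomorphism of ℝ and I an open set with f(I) ∩ I = ∅ and moreover fⁿ(I) ∩ I = ∅ for all n ≠ 0. If h is a homeomorphism of ℝ supported on I, then the maps f⁻ⁿ h^(2ⁿ) fⁿ for n ≥ 0 (on f⁻ⁿ(I)) together with suitable 2ⁿ-th roots on fⁿ(I) define a homeomorphism g of ℝ, supported on ⋃ₙ fⁿ(I), equal to h on I, and satisfying f g f⁻¹ = g². -/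
/-!
On a component `C` of the support of an increasing homeomorphism `h` of `ℝ`, `h` is conjugate to
the translation `r ↦ r ± 1` of `ℝ`, through `r ↦ h ^ ⌊r⌋ (c + fract r * (h c - c))` (or the same
with `h⁻¹`) for any `c ∈ C`. Conjugating the translation by `± 1/2` gives a square root of `h` on
`C`, and these glue to an increasing square root of `h` with the same fixed points. Iterating gives
increasing `Kₙ` (`n ∈ ℤ`) supported in `I` with `K₀ = h`, `Kₙ² = Kₙ₋₁` (so `Kₙ = h ^ 2 ^ (-n)` for
`n ≤ 0`). The conjugates `fⁿ Kₙ f⁻ⁿ` are supported in the pairwise disjoint sets `fⁿ(I)`, so they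
glue to an increasing homeomorphism `g`, and on `fⁿ(I)` the relation `f g f⁻¹ = g²` becomes
`Kₙ₋₁ = Kₙ²`.
-/

open Set Function Equiv

section LinearOrder

variable {α : Type*} [LinearOrder α]

lemma lt_of_lt_of_disjoint_uIcc {a a' b b' : α} (hab : a < b)
    (hdisj : Disjoint (uIcc a a') (uIcc b b')) : a' < b' := by
  by_contra! hba
  rcases le_or_gt b a' with hba' | hab'
  · exact disjoint_left.1 hdisj ⟨inf_le_left.trans hab.le, hba'.trans le_sup_right⟩
      ⟨inf_le_left, le_sup_left⟩
  · exact disjoint_left.1 hdisj ⟨inf_le_right, le_sup_right⟩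
      ⟨inf_le_right.trans hba, hab'.le.trans le_sup_left⟩

lemma StrictMono.uIcc_apply_subset {σ : α → α} (hσ : StrictMono σ) {A : Set α}
    (hA : ∀ t, σ t ≠ t → t ∈ A) {x : α} (hx : x ∈ A) : uIcc x (σ x) ⊆ A := by
  intro t ht
  by_contra htA
  have hfix : σ t = t := not_not.1 (mt (hA t) htA)
  rcases lt_trichotomy x t with hxt | rfl | htx
  · have := hσ hxt
    rcases mem_uIcc.1 ht with h | h <;> order
  · exact htA hx
  · have := hσ htx
    rcases mem_uIcc.1 ht with h | h <;> order

theorem strictMono_of_strictMonoOn_pieces {ι : Type*} {S : ι → Set α}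
    (hS : ∀ i j, S i = S j ∨ Disjoint (S i) (S j)) {k : α → α}
    (hid : ∀ x, (∀ i, x ∉ S i) → k x = x) (hmono : ∀ i, StrictMonoOn k (S i))
    (huIcc : ∀ i, ∀ x ∈ S i, uIcc x (k x) ⊆ S i) : StrictMono k := by
  have hpt : ∀ x, (∀ i, x ∉ S i) → uIcc x (k x) = {x} := fun x hx => by
    rw [hid x hx, uIcc_self]
  intro x y hxy
  by_cases hx : ∃ i, x ∈ S i <;> by_cases hy : ∃ j, y ∈ S j
  · obtain ⟨⟨i, hxi⟩, ⟨j, hyj⟩⟩ := And.intro hx hy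
    rcases hS i j with hij | hij
    · exact hmono j (hij ▸ hxi) hyj hxy
    · exact lt_of_lt_of_disjoint_uIcc hxy (hij.mono (huIcc i x hxi) (huIcc j y hyj))
  · obtain ⟨i, hxi⟩ := hx
    refine lt_of_lt_of_disjoint_uIcc hxy ?_
    rw [hpt y (not_exists.1 hy), disjoint_singleton_right]
    exact fun hyx => not_exists.1 hy i (huIcc i x hxi hyx)
  · obtain ⟨j, hyj⟩ := hy
    refine lt_of_lt_of_disjoint_uIcc hxy ?_
    rw [hpt x (not_exists.1 hx), disjoint_singleton_left]
    exact fun hxy' => not_exists.1 hx j (huIcc j y hyj hxy')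
  · rwa [hid x (not_exists.1 hx), hid y (not_exists.1 hy)]

end LinearOrder

theorem surjective_of_surjOn_pieces {α ι : Type*} {S : ι → Set α} {k : α → α}
    (hid : ∀ x, (∀ i, x ∉ S i) → k x = x) (hsurj : ∀ i, SurjOn k (S i) (S i)) :
    Surjective k := by
  intro y
  by_cases hy : ∃ i, y ∈ S i
  · obtain ⟨i, hyi⟩ := hy
    obtain ⟨x, -, hx⟩ := hsurj i hyi
    exact ⟨x, hx⟩
  · exact ⟨y, hid y (not_exists.1 hy)⟩

lemma connectedComponentIn_eq_or_disjoint {X : Type*} [TopologicalSpace X] (F : Set X) (x y : X) :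
    connectedComponentIn F x = connectedComponentIn F y ∨
      Disjoint (connectedComponentIn F x) (connectedComponentIn F y) :=
  or_iff_not_imp_right.2 fun hxy => by
    obtain ⟨z, hzx, hzy⟩ := not_disjoint_iff.1 hxy
    exact (connectedComponentIn_eq hzx).trans (connectedComponentIn_eq hzy).symm

theorem Submonoid.exists_iterated_sqrt {M : Type*} [Monoid M] (S : Submonoid M)
    (hS : ∀ a ∈ S, ∃ b ∈ S, b * b = a) {a : M} (ha : a ∈ S) :
    ∃ K : ℤ → M, K 0 = a ∧ (∀ n, K n ∈ S) ∧ ∀ n, K n * K n = K (n - 1) := by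
  choose r hrS hr using fun b : S => hS b b.2
  let R : ℕ → S := fun n => (fun b => ⟨r b, hrS b⟩)^[n] ⟨a, ha⟩
  set K : ℤ → M := fun n => if 0 ≤ n then R n.toNat else a ^ 2 ^ (-n).toNat
  have hpos : ∀ n : ℕ, K n = R n := fun n => if_pos n.cast_nonneg
  have hneg : ∀ n ≤ 0, K n = a ^ 2 ^ (-n).toNat := fun n hn => by
    rcases hn.lt_or_eq with hn | rfl
    · exact if_neg hn.not_ge
    · simp [K, R]
  refine ⟨K, by simp [hneg], fun n => ?_, fun n => ?_⟩
  · rcases le_or_gt 0 n with hn | hn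
    · lift n to ℕ using hn
      exact hpos n ▸ (R n).2
    · exact hneg n hn.le ▸ S.pow_mem ha _
  · rcases le_or_gt 1 n with hn | hn
    · obtain ⟨m, rfl⟩ : ∃ m : ℕ, n = m + 1 := ⟨(n - 1).toNat, by omega⟩
      rw [add_sub_cancel_right, hpos, ← Nat.cast_succ, hpos]
      simp only [R, iterate_succ_apply']
      exact hr _
    · rw [hneg n (by omega), hneg (n - 1) (by omega),
        show (-(n - 1)).toNat = (-n).toNat + 1 by omega, pow_succ, pow_mul, sq]

namespace Equiv.Perm

variable {α : Type*}

variable (α) in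
def strictMonoSubgroup [LinearOrder α] : Subgroup (Perm α) where
  carrier := {σ | StrictMono σ}
  mul_mem' hσ hτ := hσ.comp hτ
  one_mem' := strictMono_id
  inv_mem' {σ} hσ a b hab := hσ.lt_iff_lt.1 (by simpa using hab)

lemma strictMono_zpow [LinearOrder α] {σ : Perm α} (hσ : StrictMono σ) (n : ℤ) :
    StrictMono ⇑(σ ^ n) :=
  (strictMonoSubgroup α).zpow_mem hσ n

lemma strictMono_zpow_apply [LinearOrder α] {σ : Perm α} (hσ : StrictMono σ) {c : α}
    (hc : c < σ c) : StrictMono fun n : ℤ => (σ ^ n) c :=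
  strictMono_int_of_lt_succ fun n => by
    rw [zpow_add_one, mul_apply]
    exact strictMono_zpow hσ n hc

lemma zpow_apply_mem_iff {σ : Perm α} {C : Set α} (hC : ∀ t, σ t ∈ C ↔ t ∈ C) (n : ℤ) (t : α) :
    (σ ^ n) t ∈ C ↔ t ∈ C := by
  induction n using Int.induction_on generalizing t with
  | zero => rfl
  | succ n ih => rw [zpow_add_one, mul_apply, ih, hC]
  | pred n ih => rw [zpow_sub_one, mul_apply, ih, ← hC, ← mul_apply, mul_inv_cancel, one_apply]

lemma mapsTo_of_forall_ne (σ : Perm α) {A : Set α} (hA : ∀ t, σ t ≠ t → t ∈ A) :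
    MapsTo σ A A := fun x hx => by
  by_cases hfix : σ x = x
  · rwa [hfix]
  · exact hA _ (σ.injective.ne hfix)

lemma mem_image_of_conj_apply_ne {τ k : Perm α} {I : Set α}
    (hk : k ∈ fixingSubgroup (Perm α) Iᶜ) {t : α} (ht : (τ * k * τ⁻¹) t ≠ t) : t ∈ τ '' I := by
  refine ⟨τ⁻¹ t, by_contra fun hu => ht ?_, τ.apply_symm_apply t⟩
  have hfix : k (τ⁻¹ t) = τ⁻¹ t := (mem_fixingSubgroup_iff (Perm α)).1 hk _ hu
  rw [mul_apply, mul_apply, hfix]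
  exact τ.apply_symm_apply t

end Equiv.Perm

theorem exists_strictMono_perm_eq_on_pieces {α ι : Type*} [LinearOrder α] {A : ι → Set α}
    (hA : Pairwise (Disjoint on A)) (G : ι → Perm α) (hG : ∀ i, StrictMono (G i))
    (hGA : ∀ i x, G i x ≠ x → x ∈ A i) :
    ∃ g : Perm α, StrictMono g ∧ (∀ i, ∀ x ∈ A i, g x = G i x) ∧
      ∀ x, (∀ i, x ∉ A i) → g x = x := by
  classical
  set k : α → α := fun x => if hx : ∃ i, x ∈ A i then G hx.choose x else x
  have hk : ∀ i, ∀ x ∈ A i, k x = G i x := fun i x hx => by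
    have hex : ∃ i, x ∈ A i := ⟨i, hx⟩
    have hi : hex.choose = i := by
      by_contra hne
      exact disjoint_left.1 (hA hne) hex.choose_spec hx
    simp only [k, dif_pos hex, hi]
  have hid : ∀ x, (∀ i, x ∉ A i) → k x = x := fun x hx => dif_neg (not_exists.2 hx)
  have hmono : StrictMono k := by
    refine strictMono_of_strictMonoOn_pieces
      (fun i j => (eq_or_ne i j).imp (congrArg A) (@hA i j)) hid
      (fun i x hx y hy hxy => ?_) (fun i x hx => ?_)
    · rw [hk i x hx, hk i y hy]; exact hG i hxy
    · rw [hk i x hx]; exact (hG i).uIcc_apply_subset (hGA i) hx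
  have hsurj : Surjective k := by
    refine surjective_of_surjOn_pieces hid fun i y hy => ?_
    have hmem : (G i)⁻¹ y ∈ A i := (G i)⁻¹.mapsTo_of_forall_ne
      (fun t ht => hGA i t fun hfix => ht (by rw [Perm.inv_eq_iff_eq, hfix])) hy
    exact ⟨_, hmem, by rw [hk i _ hmem]; exact (G i).apply_symm_apply y⟩
  exact ⟨ofBijective k ⟨hmono.injective, hsurj⟩, hmono, hk, hid⟩

section Dynamics

variable {α : Type*} [ConditionallyCompleteLinearOrder α] [TopologicalSpace α] [OrderTopology α]

lemma exists_lt_iterate_of_forall_ne {σ : α → α} (hσ : Continuous σ) (hmono : Monotone σ)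
    {c x : α} (hc : c ≤ σ c) (hfix : ∀ t ∈ Icc c x, σ t ≠ t) : ∃ n : ℕ, x < σ^[n] c := by
  by_contra! hle
  have hbdd : BddAbove (range fun n => σ^[n] c) := ⟨x, forall_mem_range.2 hle⟩
  have hlim := tendsto_atTop_ciSup (hmono.monotone_iterate_of_le_map hc) hbdd
  exact hfix _ ⟨le_ciSup_of_le hbdd 0 le_rfl, ciSup_le hle⟩
    (isFixedPt_of_tendsto_iterate hlim hσ.continuousAt)

lemma IsPreconnected.forall_lt_apply_or_forall_apply_lt {C : Set α} (hC : IsPreconnected C)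
    {σ : α → α} (hσ : ContinuousOn σ C) (hfix : ∀ t ∈ C, σ t ≠ t) :
    (∀ t ∈ C, t < σ t) ∨ ∀ t ∈ C, σ t < t := by
  by_contra! h
  obtain ⟨⟨a, ha, hσa⟩, ⟨b, hb, hσb⟩⟩ := h
  obtain ⟨t, ht, hσt⟩ := hC.intermediate_value₂ hb ha continuousOn_id hσ hσb hσa
  exact hfix t ht hσt.symm

lemma Equiv.Perm.exists_zpow_apply_le_lt {σ : Perm α} (hσ : StrictMono σ) {C : Set α}
    (hC : C.OrdConnected) (hlt : ∀ t ∈ C, t < σ t) {c x : α} (hc : c ∈ C) (hx : x ∈ C) :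
    ∃ n : ℤ, (σ ^ n) c ≤ x ∧ x < (σ ^ (n + 1)) c := by
  have hcont : Continuous σ := (hσ.orderIsoOfSurjective σ σ.surjective).continuous
  have hfix : ∀ a ∈ C, ∀ b ∈ C, ∀ t ∈ Icc a b, σ t ≠ t :=
    fun a ha b hb t ht => (hlt t (hC.out ha hb ht)).ne'
  obtain ⟨m, hm⟩ := exists_lt_iterate_of_forall_ne hcont hσ.monotone (hlt c hc).le
    (hfix c hc x hx)
  obtain ⟨l, hl⟩ := exists_lt_iterate_of_forall_ne hcont hσ.monotone (hlt x hx).le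
    (hfix x hx c hc)
  rw [iterate_eq_pow, ← zpow_natCast] at hm hl
  have hu := strictMono_zpow_apply hσ (hlt c hc)
  obtain ⟨n, hn, hmax⟩ : ∃ n : ℤ, (σ ^ n) c ≤ x ∧ ∀ z : ℤ, (σ ^ z) c ≤ x → z ≤ n := by
    refine Int.exists_greatest_of_bdd ⟨m, fun z hz => (hu.lt_iff_lt.1 (hz.trans_lt hm)).le⟩
      ⟨-l, ?_⟩
    have := strictMono_zpow hσ (-l) hl
    rw [← mul_apply, ← zpow_add, neg_add_cancel, zpow_zero, one_apply] at this
    exact this.le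
  exact ⟨n, hn, not_le.1 fun h => (hmax _ h).not_gt (lt_add_one n)⟩

end Dynamics

namespace Equiv.Perm

noncomputable section

variable {σ : Perm ℝ} {c : ℝ}

def orbitParam (σ : Perm ℝ) (c r : ℝ) : ℝ := (σ ^ ⌊r⌋) (c + Int.fract r * (σ c - c))

lemma orbitParam_add_one (σ : Perm ℝ) (c r : ℝ) :
    orbitParam σ c (r + 1) = σ (orbitParam σ c r) := by
  rw [orbitParam, orbitParam, Int.floor_add_one, Int.fract_add_one, zpow_add_one,
    ← mul_apply, ← (Commute.self_zpow σ ⌊r⌋).eq]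

lemma orbitParam_intCast_add (σ : Perm ℝ) (c : ℝ) (n : ℤ) {t : ℝ} (ht : t ∈ Ico 0 1) :
    orbitParam σ c (n + t) = (σ ^ n) (c + t * (σ c - c)) := by
  rw [orbitParam, Int.floor_intCast_add, Int.fract_intCast_add, Int.floor_eq_zero_iff.2 ht,
    add_zero, Int.fract_eq_self.2 ht]

lemma strictMono_orbitParam (hσ : StrictMono σ) (hc : c < σ c) :
    StrictMono (orbitParam σ c) := by
  have hd : 0 < σ c - c := sub_pos.2 hc
  intro r s hrs
  rcases (Int.floor_mono hrs.le).eq_or_lt with hfl | hfl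
  · have hfract : Int.fract r < Int.fract s := by
      rw [Int.fract, Int.fract, hfl]; linarith
    rw [orbitParam, orbitParam, hfl]
    exact strictMono_zpow hσ _ (by gcongr)
  · calc orbitParam σ c r < (σ ^ (⌊r⌋ + 1)) c := by
          rw [orbitParam, zpow_add_one, mul_apply]
          refine strictMono_zpow hσ _ ?_
          nlinarith [Int.fract_lt_one r]
      _ ≤ (σ ^ ⌊s⌋) c := (strictMono_zpow_apply hσ hc).monotone (Int.add_one_le_iff.2 hfl)
      _ ≤ orbitParam σ c s :=
          (strictMono_zpow hσ _).monotone (by nlinarith [Int.fract_nonneg s])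

lemma range_orbitParam (hσ : StrictMono σ) {C : Set ℝ} (hC : C.OrdConnected)
    (hσC : ∀ t, σ t ∈ C ↔ t ∈ C) (hlt : ∀ t ∈ C, t < σ t) (hc : c ∈ C) :
    range (orbitParam σ c) = C := by
  have hd : 0 < σ c - c := sub_pos.2 (hlt c hc)
  refine Subset.antisymm (range_subset_iff.2 fun r => ?_) fun x hx => ?_
  · rw [orbitParam, zpow_apply_mem_iff hσC]
    refine hC.out hc ((hσC c).2 hc) ⟨?_, ?_⟩
    · nlinarith [Int.fract_nonneg r]
    · nlinarith [Int.fract_lt_one r]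
  · obtain ⟨n, hn, hn'⟩ := exists_zpow_apply_le_lt hσ hC hlt hc hx
    set s := (σ ^ n).symm x
    have hxs : (σ ^ n) s = x := apply_symm_apply _ _
    rw [← hxs] at hn hn'
    rw [zpow_add_one, mul_apply] at hn'
    have hcs := (strictMono_zpow hσ n).le_iff_le.1 hn
    have hsc := (strictMono_zpow hσ n).lt_iff_lt.1 hn'
    have ht : (s - c) / (σ c - c) ∈ Ico 0 1 :=
      ⟨div_nonneg (sub_nonneg.2 hcs) hd.le, (div_lt_one hd).2 (by linarith)⟩
    refine ⟨n + (s - c) / (σ c - c), ?_⟩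
    rw [orbitParam_intCast_add _ _ _ ht, div_mul_cancel₀ _ hd.ne', add_sub_cancel, hxs]

def orbitShift (σ : Perm ℝ) (c a x : ℝ) : ℝ :=
  orbitParam σ c (invFun (orbitParam σ c) x + a)

section orbitShift

variable (hσ : StrictMono σ) (hc : c < σ c)
include hσ hc

lemma orbitShift_orbitParam (a r : ℝ) :
    orbitShift σ c a (orbitParam σ c r) = orbitParam σ c (r + a) := by
  rw [orbitShift, leftInverse_invFun (strictMono_orbitParam hσ hc).injective]

lemma orbitShift_orbitShift (a b : ℝ) {x : ℝ} (hx : x ∈ range (orbitParam σ c)) :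
    orbitShift σ c a (orbitShift σ c b x) = orbitShift σ c (b + a) x := by
  obtain ⟨r, rfl⟩ := hx
  rw [orbitShift_orbitParam hσ hc, orbitShift_orbitParam hσ hc, orbitShift_orbitParam hσ hc,
    add_assoc]

lemma orbitShift_one {x : ℝ} (hx : x ∈ range (orbitParam σ c)) : orbitShift σ c 1 x = σ x := by
  obtain ⟨r, rfl⟩ := hx
  rw [orbitShift_orbitParam hσ hc, orbitParam_add_one]

lemma orbitShift_neg_one {x : ℝ} (hx : x ∈ range (orbitParam σ c)) :
    orbitShift σ c (-1) x = σ⁻¹ x := by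
  obtain ⟨r, rfl⟩ := hx
  rw [orbitShift_orbitParam hσ hc, eq_comm, inv_eq_iff_eq, ← orbitParam_add_one,
    neg_add_cancel_right]

lemma strictMonoOn_orbitShift (a : ℝ) :
    StrictMonoOn (orbitShift σ c a) (range (orbitParam σ c)) := by
  rintro _ ⟨r, rfl⟩ _ ⟨s, rfl⟩ hrs
  have hψ := strictMono_orbitParam hσ hc
  rw [orbitShift_orbitParam hσ hc, orbitShift_orbitParam hσ hc]
  exact hψ (add_lt_add_left (hψ.lt_iff_lt.1 hrs) a)

lemma surjOn_orbitShift (a : ℝ) :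
    SurjOn (orbitShift σ c a) (range (orbitParam σ c)) (range (orbitParam σ c)) := by
  rintro _ ⟨r, rfl⟩
  exact ⟨_, mem_range_self (r - a), by rw [orbitShift_orbitParam hσ hc, sub_add_cancel]⟩

end orbitShift

variable {h : Perm ℝ}

/-- The base point depends on `C` alone, so that all points of a component use the same root. -/
def componentRoot (h : Perm ℝ) (C : Set ℝ) : ℝ → ℝ :=
  let c := Classical.epsilon (· ∈ C)
  if c < h c then orbitShift h c (1 / 2) else orbitShift h⁻¹ c (-(1 / 2))

lemma componentRoot_spec (hh : StrictMono h) {C : Set ℝ} (hC : IsPreconnected C)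
    (hhC : ∀ t, h t ∈ C ↔ t ∈ C) (hfix : ∀ t ∈ C, h t ≠ t) :
    MapsTo (componentRoot h C) C C ∧ StrictMonoOn (componentRoot h C) C ∧
      SurjOn (componentRoot h C) C C ∧ ∀ x ∈ C, componentRoot h C (componentRoot h C x) = h x := by
  rcases C.eq_empty_or_nonempty with rfl | hne
  · simp [StrictMonoOn]
  set c := Classical.epsilon (· ∈ C)
  have hc : c ∈ C := Classical.epsilon_spec hne
  obtain ⟨σ, a, hσ, hσC, hlt, hroot, hsq⟩ : ∃ (σ : Perm ℝ) (a : ℝ), StrictMono σ ∧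
      (∀ t, σ t ∈ C ↔ t ∈ C) ∧ (∀ t ∈ C, t < σ t) ∧ componentRoot h C = orbitShift σ c a ∧
      ∀ x ∈ range (orbitParam σ c), orbitShift σ c (a + a) x = h x := by
    have hcont : Continuous h := (hh.orderIsoOfSurjective h h.surjective).continuous
    rcases hC.forall_lt_apply_or_forall_apply_lt hcont.continuousOn hfix with hlt | hgt
    · refine ⟨h, 1 / 2, hh, hhC, hlt, if_pos (hlt c hc), fun x hx => ?_⟩
      rw [add_halves, orbitShift_one hh (hlt c hc) hx]
    · have hinvC : ∀ t, h⁻¹ t ∈ C ↔ t ∈ C := by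
        simpa using zpow_apply_mem_iff hhC (-1)
      have hlt : ∀ t ∈ C, t < h⁻¹ t := fun t ht => by
        simpa using hgt _ ((hinvC t).2 ht)
      have hinv : StrictMono ⇑h⁻¹ := (strictMonoSubgroup ℝ).inv_mem hh
      refine ⟨h⁻¹, -(1 / 2), hinv, hinvC, hlt, if_neg (hgt c hc).not_gt, fun x hx => ?_⟩
      rw [← neg_add, add_halves, orbitShift_neg_one hinv (hlt c hc) hx, inv_inv]
  have hcσ : c < σ c := hlt c hc
  rw [hroot, ← range_orbitParam hσ hC.ordConnected hσC hlt hc]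
  exact ⟨fun x _ => mem_range_self _, strictMonoOn_orbitShift hσ hcσ a,
    surjOn_orbitShift hσ hcσ a, fun x hx => by rw [orbitShift_orbitShift hσ hcσ a a hx, hsq x hx]⟩

lemma connectedComponentIn_apply_eq (hh : StrictMono h) {t : ℝ} (ht : h t ≠ t) :
    connectedComponentIn {y | h y ≠ y} (h t) = connectedComponentIn {y | h y ≠ y} t := by
  have hsub := isPreconnected_uIcc.subset_connectedComponentIn left_mem_uIcc
    (hh.uIcc_apply_subset (fun _ hy => hy) ht)
  exact (connectedComponentIn_eq (hsub right_mem_uIcc)).symm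

lemma apply_mem_connectedComponentIn_iff (hh : StrictMono h) (x t : ℝ) :
    h t ∈ connectedComponentIn {y | h y ≠ y} x ↔ t ∈ connectedComponentIn {y | h y ≠ y} x := by
  by_cases ht : h t = t
  · rw [ht]
  constructor <;> intro hmem
  · rw [connectedComponentIn_eq hmem, connectedComponentIn_apply_eq hh ht]
    exact mem_connectedComponentIn ht
  · rw [connectedComponentIn_eq hmem, ← connectedComponentIn_apply_eq hh ht]
    exact mem_connectedComponentIn (h.injective.ne ht)

theorem exists_strictMono_mul_self_eq (hh : StrictMono h) :
    ∃ k : Perm ℝ, StrictMono k ∧ k * k = h ∧ ∀ x, h x = x → k x = x := by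
  classical
  set U := {y | h y ≠ y}
  set S := connectedComponentIn U
  set k : ℝ → ℝ := fun x => if x ∈ U then componentRoot h (S x) x else x
  have hk : ∀ i, EqOn (componentRoot h (S i)) k (S i) := fun i x hx => by
    simp only [k, if_pos (connectedComponentIn_subset _ _ hx), S, connectedComponentIn_eq hx]
  have hspec := fun i => componentRoot_spec hh (isPreconnected_connectedComponentIn (x := i))
    (apply_mem_connectedComponentIn_iff hh i) fun t ht => connectedComponentIn_subset _ _ ht
  have hid : ∀ x, (∀ i, x ∉ S i) → k x = x := fun x hx =>
    if_neg fun hxU => hx x (mem_connectedComponentIn hxU)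
  have hmono : StrictMono k :=
    strictMono_of_strictMonoOn_pieces (connectedComponentIn_eq_or_disjoint U) hid
      (fun i => (hspec i).2.1.congr (hk i)) fun i x hx =>
        isPreconnected_connectedComponentIn.ordConnected.uIcc_subset hx
          ((hspec i).1.congr (hk i) hx)
  have hsurj : Surjective k :=
    surjective_of_surjOn_pieces hid fun i => (hspec i).2.2.1.congr (hk i)
  refine ⟨ofBijective k ⟨hmono.injective, hsurj⟩, hmono, Equiv.ext fun x => ?_,
    fun x hx => if_neg (not_not.2 hx)⟩
  show k (k x) = h x
  by_cases hx : x ∈ U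
  · have hxS : x ∈ S x := mem_connectedComponentIn hx
    rw [← hk x hxS, ← hk x ((hspec x).1 hxS), (hspec x).2.2.2 x hxS]
  · have hkx : k x = x := if_neg hx
    rw [hkx, hkx, not_not.1 hx]

end

end Equiv.Perm

section ZpowImage

variable {α : Type*}

lemma pairwise_disjoint_zpow_image (f : Perm α) {I : Set α}
    (hdisj : ∀ n : ℤ, n ≠ 0 → ⇑(f ^ n) '' I ∩ I = ∅) :
    Pairwise (Disjoint on fun n : ℤ => ⇑(f ^ n) '' I) := by
  refine fun n m hnm => disjoint_left.2 ?_
  rintro _ ⟨a, ha, rfl⟩ ⟨b, hb, hba⟩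
  have hab : (f ^ (n - m)) a = b := (f ^ m).injective <| by
    rw [hba, ← Perm.mul_apply, ← zpow_add, add_sub_cancel]
  exact (hdisj (n - m) (sub_ne_zero.2 hnm)).subset ⟨⟨a, ha, hab⟩, hb⟩

lemma apply_mem_zpow_image_iff (f : Perm α) (I : Set α) (n : ℤ) (y : α) :
    f y ∈ ⇑(f ^ n) '' I ↔ y ∈ ⇑(f ^ (n - 1)) '' I := by
  rw [show f ^ n = f * f ^ (n - 1) by group, Perm.coe_mul, image_comp, f.injective.mem_set_image]

lemma conj_eq_sq_of_eq_on_zpow_image (f : Perm α) (I : Set α) {g : α → α}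
    (G : ℤ → Perm α) (hG : ∀ n, f * G (n - 1) * f⁻¹ = G n * G n)
    (hGI : ∀ n, MapsTo (G n) (⇑(f ^ n) '' I) (⇑(f ^ n) '' I))
    (hgG : ∀ n, ∀ x ∈ ⇑(f ^ n) '' I, g x = G n x)
    (hgid : ∀ x, (∀ n : ℤ, x ∉ ⇑(f ^ n) '' I) → g x = x) (x : α) :
    f (g (f.symm x)) = g (g x) := by
  by_cases hx : ∃ n : ℤ, x ∈ ⇑(f ^ n) '' I
  · obtain ⟨n, hxn⟩ := hx
    have hfx : f.symm x ∈ ⇑(f ^ (n - 1)) '' I := by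
      rwa [← apply_mem_zpow_image_iff, apply_symm_apply]
    rw [hgG _ _ hfx, hgG n x hxn, hgG n _ (hGI n hxn), ← Perm.mul_apply (G n), ← hG]
    rfl
  · have hfx : ∀ n : ℤ, f.symm x ∉ ⇑(f ^ n) '' I := fun n hn =>
      hx ⟨n + 1, by rwa [← apply_symm_apply f x, apply_mem_zpow_image_iff, add_sub_cancel_right]⟩
    rw [hgid _ hfx, hgid x (not_exists.1 hx), hgid x (not_exists.1 hx), apply_symm_apply]

end ZpowImage

open Equiv.Perm

theorem extend_by_relation_general (f : Equiv.Perm ℝ) (hf : StrictMono ⇑f)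
    (I : Set ℝ)
    (hdisj : ∀ n : ℤ, n ≠ 0 → (⇑(f ^ n) '' I) ∩ I = ∅)
    (h : Equiv.Perm ℝ) (hh : StrictMono ⇑h)
    (hsupp : {x : ℝ | h x ≠ x} ⊆ I) :
    ∃ g : Equiv.Perm ℝ, StrictMono ⇑g ∧
      (∀ x ∈ I, g x = h x) ∧
      {x : ℝ | g x ≠ x} ⊆ ⋃ n : ℤ, ⇑(f ^ n) '' I ∧
      ∀ x : ℝ, f (g (f.symm x)) = g (g x) := by
  set T := strictMonoSubgroup ℝ
  set S := T ⊓ fixingSubgroup (Perm ℝ) Iᶜ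
  have hroot : ∀ k ∈ S.toSubmonoid, ∃ r ∈ S.toSubmonoid, r * r = k := by
    rintro k ⟨hk, hkI⟩
    obtain ⟨r, hr, hrk, hfix⟩ := exists_strictMono_mul_self_eq hk
    refine ⟨r, ⟨hr, ?_⟩, hrk⟩
    exact (mem_fixingSubgroup_iff _).2 fun x hx => hfix x ((mem_fixingSubgroup_iff _).1 hkI x hx)
  obtain ⟨K, hK0, hKS, hKsq⟩ := S.toSubmonoid.exists_iterated_sqrt hroot (a := h)
    ⟨hh, (mem_fixingSubgroup_iff _).2 fun x hx => not_not.1 fun hne => hx (hsupp hne)⟩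
  set G : ℤ → Perm ℝ := fun n => f ^ n * K n * (f ^ n)⁻¹
  have hGA : ∀ n t, G n t ≠ t → t ∈ ⇑(f ^ n) '' I := fun n _ =>
    mem_image_of_conj_apply_ne (hKS n).2
  obtain ⟨g, hg, hgG, hgid⟩ := exists_strictMono_perm_eq_on_pieces
    (pairwise_disjoint_zpow_image f hdisj) G
    (fun n => T.mul_mem (T.mul_mem (T.zpow_mem hf n) (hKS n).1) (T.inv_mem (T.zpow_mem hf n))) hGA
  refine ⟨g, hg, fun x hx => ?_, fun x hx => ?_, conj_eq_sq_of_eq_on_zpow_image f I G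
    (fun n => by simp only [G]; rw [← hKsq n]; group) (fun n => (G n).mapsTo_of_forall_ne (hGA n))
    hgG hgid⟩
  · rw [hgG 0 x (by simpa using hx)]
    simp [G, hK0]
  · by_contra hxA
    exact hx (hgid x fun n hn => hxA (mem_iUnion.2 ⟨n, hn⟩))

theorem extend_by_relation (f : Equiv.Perm ℝ) (hf : StrictMono ⇑f)
    (I : Set ℝ) (hI : IsOpen I)
    (hdisj : ∀ n : ℤ, n ≠ 0 → (⇑(f ^ n) '' I) ∩ I = ∅)
    (h : Equiv.Perm ℝ) (hh : StrictMono ⇑h)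
    (hsupp : {x : ℝ | h x ≠ x} ⊆ I) :
    ∃ g : Equiv.Perm ℝ, StrictMono ⇑g ∧
      (∀ x ∈ I, g x = h x) ∧
      {x : ℝ | g x ≠ x} ⊆ ⋃ n : ℤ, ⇑(f ^ n) '' I ∧
      ∀ x : ℝ, f (g (f.symm x)) = g (g x) :=
  extend_by_relation_general f hf I hdisj h hh hsupp
end

section
/- A countable group is left-orderable if and only if it embeds into the group of orientation-preserving homeomorphisms of ℝ. -/
/-!
A left order on a countable group `G` makes `G` act faithfully, by left multiplication on the first
coordinate, on the lexicographic product `G ×ₗ ℚ`. This is a countable dense linear order without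
endpoints, hence isomorphic to `ℚ` by Cantor's theorem, and every order automorphism of `ℚ` extends
to one of `ℝ` by taking suprema.

Conversely, if `G` acts faithfully by increasing bijections of a linear order `X`, well-order `X`
and compare `g` and `h` through the lexicographic order of their orbit maps `x ↦ g x` and
`x ↦ h x`; this order is left invariant because composing with an increasing map preserves the
lexicographic order.
-/

open Function

namespace OrderIso

variable (f : ℚ ≃o ℚ)

noncomputable def extendRat (x : ℝ) : ℝ :=
  sSup ((fun q : ℚ => (f q : ℝ)) '' {q : ℚ | (q : ℝ) ≤ x})

variable {f}

theorem extendRat_le {x : ℝ} {r : ℚ} (hxr : x ≤ r) : f.extendRat x ≤ f r := by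
  obtain ⟨q, hq⟩ := exists_rat_lt x
  refine csSup_le ⟨f q, q, hq.le, rfl⟩ ?_
  rintro _ ⟨p, hp, rfl⟩
  exact Rat.cast_le.2 (f.monotone (Rat.cast_le.1 (hp.trans hxr)))

theorem le_extendRat {x : ℝ} {q : ℚ} (hqx : q ≤ x) : f q ≤ f.extendRat x := by
  obtain ⟨r, hr⟩ := exists_rat_gt x
  refine le_csSup ⟨f r, ?_⟩ ⟨q, hqx, rfl⟩
  rintro _ ⟨p, hp, rfl⟩
  exact Rat.cast_le.2 (f.monotone (Rat.cast_le.1 (hp.trans hr.le)))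

/-- As `f` maps onto `ℚ`, which is dense in `ℝ`, there is no room between the values of `f` at
rationals below `x` and those at rationals above `x`. -/
theorem eq_extendRat {x y : ℝ} (hle : ∀ q : ℚ, (q : ℝ) ≤ x → (f q : ℝ) ≤ y)
    (hge : ∀ q : ℚ, x ≤ q → y ≤ f q) : y = f.extendRat x := by
  have hsep (p : ℚ) :
      ((f p : ℝ) ≤ y ∧ (f p : ℝ) ≤ f.extendRat x) ∨ (y ≤ f p ∧ f.extendRat x ≤ f p) :=
    (le_total (p : ℝ) x).imp (fun h => ⟨hle p h, le_extendRat h⟩)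
      (fun h => ⟨hge p h, extendRat_le h⟩)
  by_contra hne
  obtain ⟨r, hr_min, hr_max⟩ := exists_rat_btwn (min_lt_max.2 hne)
  rcases hsep (f.symm r) with h | h <;> rw [f.apply_symm_apply] at h
  · exact (le_min h.1 h.2).not_gt hr_min
  · exact (max_le h.1 h.2).not_gt hr_max

theorem extendRat_coe (q : ℚ) : f.extendRat q = f q :=
  (eq_extendRat (fun _ hp => mod_cast f.monotone (mod_cast hp))
    (fun _ hp => mod_cast f.monotone (mod_cast hp))).symm

theorem extendRat_one (x : ℝ) : (1 : ℚ ≃o ℚ).extendRat x = x :=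
  (eq_extendRat (fun _ hq => hq) (fun _ hq => hq)).symm

theorem extendRat_mul (f g : ℚ ≃o ℚ) (x : ℝ) :
    (f * g).extendRat x = f.extendRat (g.extendRat x) :=
  (eq_extendRat (f := f * g) (fun _ hq => le_extendRat (f := f) (le_extendRat (f := g) hq))
    (fun _ hq => extendRat_le (f := f) (extendRat_le (f := g) hq))).symm

theorem extendRat_strictMono (f : ℚ ≃o ℚ) : StrictMono f.extendRat := by
  intro x y hxy
  obtain ⟨q, hxq, hqy⟩ := exists_rat_btwn hxy
  obtain ⟨r, hqr, hry⟩ := exists_rat_btwn hqy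
  calc f.extendRat x ≤ f q := extendRat_le hxq.le
    _ < f r := mod_cast f.strictMono (mod_cast hqr)
    _ ≤ f.extendRat y := le_extendRat hry.le

noncomputable def extendRatHom : (ℚ ≃o ℚ) →* (ℝ ≃o ℝ) where
  toFun f :=
    { toFun := f.extendRat
      invFun := f⁻¹.extendRat
      left_inv x := by rw [← extendRat_mul, inv_mul_cancel, extendRat_one]
      right_inv x := by rw [← extendRat_mul, mul_inv_cancel, extendRat_one]
      map_rel_iff' := f.extendRat_strictMono.le_iff_le }
  map_one' := OrderIso.ext (funext extendRat_one)
  map_mul' f g := OrderIso.ext (funext (extendRat_mul f g))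

@[simp]
theorem extendRatHom_apply (f : ℚ ≃o ℚ) (x : ℝ) : extendRatHom f x = f.extendRat x := rfl

theorem extendRatHom_injective : Injective extendRatHom := fun f g hfg =>
  OrderIso.ext <| funext fun q => by
    simpa [extendRat_coe] using DFunLike.congr_fun hfg (q : ℝ)

def autCongr {α β : Type*} [Preorder α] [Preorder β] (e : α ≃o β) : (α ≃o α) ≃* (β ≃o β) where
  toEquiv := RelIso.relIsoCongr e e
  map_mul' f g := by ext; simp [RelIso.relIsoCongr_apply, RelIso.mul_apply]

end OrderIso

namespace Prod.Lex

variable (G α : Type*) [Group G] [Preorder G] [MulLeftMono G] [Preorder α]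

def mulLeftHom : G →* (G ×ₗ α ≃o G ×ₗ α) where
  toFun g := prodLexCongr (OrderIso.mulLeft g) (OrderIso.refl α)
  map_one' := by ext; simp [Prod.map]
  map_mul' g h := by ext; simp [Prod.map, mul_assoc]

theorem mulLeftHom_injective [Nonempty α] : Injective (mulLeftHom G α) := fun g h hgh => by
  obtain ⟨a⟩ := ‹Nonempty α›
  simpa [mulLeftHom, Prod.map] using
    congrArg (fun p => (ofLex p).1) (DFunLike.congr_fun hgh (toLex (1, a)))

end Prod.Lex

theorem exists_injective_monoidHom_orderIso_real (G : Type*) [Group G] [Countable G] [LinearOrder G]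
    [MulLeftMono G] : ∃ φ : G →* (ℝ ≃o ℝ), Injective φ := by
  have : Countable (G ×ₗ ℚ) := inferInstanceAs (Countable (G × ℚ))
  have : Nonempty (G ×ₗ ℚ) := inferInstanceAs (Nonempty (G × ℚ))
  obtain ⟨e⟩ := Order.iso_of_countable_dense (G ×ₗ ℚ) ℚ
  exact ⟨OrderIso.extendRatHom.comp ((OrderIso.autCongr e).toMonoidHom.comp
      (Prod.Lex.mulLeftHom G ℚ)), OrderIso.extendRatHom_injective.comp
      ((OrderIso.autCongr e).injective.comp (Prod.Lex.mulLeftHom_injective G ℚ))⟩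

theorem Pi.toLex_comp_lt_toLex_comp {ι β γ : Type*} [LT ι] [Preorder β] [Preorder γ]
    {f : β → γ} (hf : StrictMono f) {x y : ι → β} (hxy : toLex x < toLex y) :
    toLex (f ∘ x) < toLex (f ∘ y) := by
  obtain ⟨i, heq, hlt⟩ := hxy
  exact ⟨i, fun j hj => congrArg f (heq j hj), hf hlt⟩

theorem exists_mulLeftStrictMono_of_injective_strictMono {G X : Type*} [Group G] [LinearOrder X]
    (φ : G →* Equiv.Perm X) (hφ : Injective φ) (hmono : ∀ g, StrictMono (φ g)) :
    ∃ _ : LinearOrder G, MulLeftStrictMono G := by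
  -- a well-ordered type equinumerous with `X`
  let ι := (Cardinal.mk X).ord.ToType
  obtain ⟨e⟩ : Nonempty (ι ≃ X) := Cardinal.eq.1 (by simp [ι])
  let orbit (g : G) : Lex (ι → X) := toLex (φ g ∘ e)
  have horbit : Injective orbit := fun a b hab =>
    hφ <| Equiv.ext fun x => by simpa [orbit] using congrFun hab (e.symm x)
  let order : LinearOrder G := LinearOrder.lift' orbit horbit
  refine ⟨order, ⟨fun a b c hbc => ?_⟩⟩
  show orbit (a * b) < orbit (a * c)
  simpa only [orbit, map_mul, Equiv.Perm.coe_mul, comp_assoc] using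
    Pi.toLex_comp_lt_toLex_comp (hmono a) hbc

theorem countable_left_orderable_iff_embeds {G : Type*} [Group G] [Countable G] :
    (∃ _ : LinearOrder G, ∀ a b c : G, b < c → a * b < a * c) ↔
    ∃ φ : G →* Equiv.Perm ℝ, Function.Injective ⇑φ ∧ ∀ g : G, StrictMono ⇑(φ g) := by
  constructor
  · rintro ⟨_, hmul⟩
    have : MulLeftStrictMono G := ⟨hmul⟩
    have := mulLeftMono_of_mulLeftStrictMono G
    obtain ⟨φ, hφ⟩ := exists_injective_monoidHom_orderIso_real G
    exact ⟨(MulAction.toPermHom _ ℝ).comp φ,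
      (MulAction.toPerm_injective (α := ℝ ≃o ℝ)).comp hφ, fun g => (φ g).strictMono⟩
  · rintro ⟨φ, hφ, hmono⟩
    obtain ⟨_, hmul⟩ := exists_mulLeftStrictMono_of_injective_strictMono φ hφ hmono
    exact ⟨_, hmul.elim⟩
end

section
/- If G is a left-orderable group and R is a ring (with no zero divisors), then the group ring R[G] has no zero divisors. -/
theorem left_orderable_no_zero_divisors {R G : Type*} [Ring R] [Nontrivial R]
    [NoZeroDivisors R] [Group G]
    (h : ∃ _ : LinearOrder G, ∀ a b c : G, b < c → a * b < a * c) :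
    ∀ x y : MonoidAlgebra R G, x * y = 0 → x = 0 ∨ y = 0 := by
  obtain ⟨lo, hlo⟩ := h
  have : MulLeftStrictMono G := ⟨fun a b c bc => hlo a b c bc⟩
  have : UniqueProds G := TwoUniqueProds.toUniqueProds G
  exact fun x y hxy => mul_eq_zero.mp hxy
end

section
/- If f and g are orientation-preserving homeomorphisms of the circle with a common invariant probability measure, g f g⁻¹ = f², and the pair generates a group preserving the measure, then f and g have a common fixed point on the circle. -/
/-!
Both rotation numbers vanish (the relation forces `rot f = 2 • rot f`), so `f`, `g` and `g ∘ f`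
have fixed points. Since `g f = f² g`, the preimage under `g` of `Fix f` lies in `Fix f`, so the
intersection `L` of the preimages of `Fix f` under the iterates of `g` is a nonempty compact
`g`-invariant subset of `Fix f`. Cut the circle at a fixed point of `g` outside `L`: `g` becomes a
monotone self-map of an open interval preserving the compact set `L`. If it is increasing it fixes
`max L`. If it is decreasing it swaps `m = min L` and `M = max L`, which `f` fixes; as `g ∘ f` has
a fixed point, `f` cannot swap the two arcs bounded by `m` and `M`, so on `[m, M]` the map `f` is
increasing while `g` is decreasing with a fixed point `c`. Then `f (f c) = g (f c)`, which is only
possible if `f c = c`.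
-/

open Set Function

theorem apply_eq_zero_of_conj_eq_sq {G A : Type*} [Group G] [AddCommGroup A] {H : Subgroup G}
    {rot : G → A} (hrot : ∀ a b, a ∈ H → b ∈ H → rot (a * b) = rot a + rot b) {f g : G}
    (hf : f ∈ H) (hg : g ∈ H) (hrel : g * f * g⁻¹ = f ^ 2) : rot f = 0 := by
  have h1 : rot 1 = 0 := by simpa using hrot 1 1 H.one_mem H.one_mem
  have hg_inv : rot g + rot g⁻¹ = 0 := by rw [← hrot _ _ hg (H.inv_mem hg), mul_inv_cancel, h1]
  have h := hrot _ _ (H.mul_mem hg hf) (H.inv_mem hg)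
  rw [hrel, sq, hrot _ _ hf hf, hrot _ _ hg hf] at h
  have : rot f + rot f = rot f + 0 := by rw [h, ← hg_inv]; abel
  exact add_left_cancel this

theorem exists_isClosed_subset_image_eq {X : Type*} [TopologicalSpace X] [CompactSpace X]
    {g : X → X} (hgc : Continuous g) (hgs : Surjective g) {K : Set X} (hK : IsClosed K)
    (hKne : K.Nonempty) (hgK : g ⁻¹' K ⊆ K) :
    ∃ L ⊆ K, IsClosed L ∧ L.Nonempty ∧ g '' L = L := by
  set S : ℕ → Set X := fun n => g^[n] ⁻¹' K
  have hS : Antitone S := antitone_nat_of_succ_le fun n => by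
    simp only [S, iterate_succ', preimage_comp]
    exact preimage_mono hgK
  have hSc : ∀ n, IsClosed (S n) := fun n => hK.preimage (hgc.iterate n)
  have hgS : g ⁻¹' ⋂ n, S n = ⋂ n, S n := by
    simp only [S, preimage_iInter, ← preimage_comp, ← iterate_succ]
    exact hS.iInter_nat_add 1
  refine ⟨⋂ n, S n, iInter_subset S 0, isClosed_iInter hSc, ?_, ?_⟩
  · exact IsCompact.nonempty_iInter_of_sequence_nonempty_isCompact_isClosed S
      (fun n => hS n.le_succ) (fun n => hKne.preimage (hgs.iterate n)) (hSc 0).isCompact hSc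
  · rw [← hgS, image_preimage_eq _ hgs, hgS]

theorem StrictMonoOn.isFixedPt_of_strictAntiOn {α : Type*} [LinearOrder α] {F G : α → α}
    {s : Set α} (hF : StrictMonoOn F s) (hG : StrictAntiOn G s) {c : α} (hc : c ∈ s)
    (hGc : IsFixedPt G c) (hFc : F c ∈ s) (hFG : F (F c) = G (F c)) : IsFixedPt F c := by
  rcases lt_trichotomy (F c) c with h | h | h
  · have hF' : F (F c) < c := (hF hFc hc h).trans h
    have hG' : c < G (F c) := hGc.eq.symm.trans_lt (hG hFc hc h)
    exact absurd hFG (hF'.trans hG').ne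
  · exact h
  · have hF' : c < F (F c) := h.trans (hF hc hFc h)
    have hG' : G (F c) < c := (hG hc hFc h).trans_eq hGc.eq
    exact absurd hFG (hG'.trans hF').ne'

namespace OpenPartialHomeomorph

variable {α X : Type*} [TopologicalSpace α] [TopologicalSpace X] (φ : OpenPartialHomeomorph α X)
  {h : X → X} {s : Set α}

theorem mapsTo_target_of_mapsTo_image (hs : s ⊆ φ.source) (hh : MapsTo h (φ '' s) (φ '' s)) :
    MapsTo h (φ '' s) φ.target :=
  hh.mono_right (φ.image_source_eq_target ▸ image_mono hs)

theorem mapsTo_symm_comp_comp (hs : s ⊆ φ.source) (hh : MapsTo h (φ '' s) (φ '' s)) :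
    MapsTo (φ.symm ∘ h ∘ φ) s s := by
  intro t ht
  obtain ⟨u, hu, hut⟩ := hh (mem_image_of_mem φ ht)
  simpa only [comp_apply, ← hut, φ.left_inv (hs hu)] using hu

theorem apply_symm_comp_comp (hs : s ⊆ φ.source) (hh : MapsTo h (φ '' s) (φ '' s)) {t : α}
    (ht : t ∈ s) : φ ((φ.symm ∘ h ∘ φ) t) = h (φ t) :=
  φ.right_inv (φ.mapsTo_target_of_mapsTo_image hs hh (mem_image_of_mem φ ht))

theorem continuousOn_symm_comp_comp (hs : s ⊆ φ.source) (hh : MapsTo h (φ '' s) (φ '' s))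
    (hc : Continuous h) : ContinuousOn (φ.symm ∘ h ∘ φ) s :=
  φ.continuousOn_symm.comp (hc.comp_continuousOn (φ.continuousOn.mono hs)) fun _ ht =>
    φ.mapsTo_target_of_mapsTo_image hs hh (mem_image_of_mem φ ht)

theorem injOn_symm_comp_comp (hs : s ⊆ φ.source) (hh : MapsTo h (φ '' s) (φ '' s))
    (hi : Injective h) : InjOn (φ.symm ∘ h ∘ φ) s := fun t ht u hu htu =>
  φ.injOn (hs ht) (hs hu) <| hi <| by
    rw [← φ.apply_symm_comp_comp hs hh ht, ← φ.apply_symm_comp_comp hs hh hu, htu]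

theorem symm_comp_comp_image_symm_image {L : Set X} (hL : L ⊆ φ.target) :
    (φ.symm ∘ h ∘ φ) '' (φ.symm '' L) = φ.symm '' (h '' L) := by
  rw [image_comp, image_comp]
  exact congrArg _ (congrArg _ (φ.toPartialEquiv.image_symm_image_of_subset_target hL))

end OpenPartialHomeomorph

namespace AddCircle

variable {p m M : ℝ}

def arc (p : ℝ) (m M : ℝ) : Set (AddCircle p) := (↑) '' Ioo m M

theorem isOpen_arc : IsOpen (arc p m M) :=
  QuotientAddGroup.isOpenMap_coe _ isOpen_Ioo

theorem isPreconnected_arc : IsPreconnected (arc p m M) :=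
  isPreconnected_Ioo.image _ continuous_quotient_mk'.continuousOn

theorem arc_nonempty (h : m < M) : (arc p m M).Nonempty :=
  (nonempty_Ioo.2 h).image _

theorem mapsTo_image_coe_Icc {h : AddCircle p → AddCircle p} (hmM : m ≤ M)
    (hends : h '' {(m : AddCircle p), ↑M} = {↑m, ↑M})
    (harc : h '' arc p m M ⊆ arc p m M) :
    MapsTo h (((↑) : ℝ → AddCircle p) '' Icc m M) ((↑) '' Icc m M) := by
  rw [← Ioo_union_both hmM, image_union, image_pair]
  exact (mapsTo_iff_image_subset.2 harc).union_union (mapsTo_iff_image_subset.2 hends.subset)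

variable [Fact (0 < p)]

theorem injOn_coe_Ico (a : ℝ) : InjOn ((↑) : ℝ → AddCircle p) (Ico a (a + p)) :=
  fun _ hx _ hy => (coe_eq_coe_iff_of_mem_Ico hx hy).1

theorem arc_union_arc (hmM : m < M) (hM : M < m + p) :
    arc p m M ∪ arc p M (m + p) = {(m : AddCircle p), (M : AddCircle p)}ᶜ := by
  have hsplit : Ioo m M ∪ Ioo M (m + p) = Ico m (m + p) \ {m, M} := by
    ext t
    simp only [mem_union, mem_Ioo, mem_sdiff, mem_Ico, mem_insert_iff, mem_singleton_iff]
    constructor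
    · rintro (h | h) <;> refine ⟨⟨by linarith, by linarith⟩, ?_⟩ <;>
        rintro (rfl | rfl) <;> linarith
    · rintro ⟨⟨h1, h2⟩, h3⟩
      push Not at h3
      rcases h3.2.lt_or_gt with h | h
      · exact Or.inl ⟨h1.lt_of_ne' h3.1, h⟩
      · exact Or.inr ⟨h, h2⟩
  have hends : {m, M} ⊆ Ico m (m + p) := by
    rintro t (rfl | rfl) <;> constructor <;> linarith
  rw [arc, arc, ← image_union, hsplit, (injOn_coe_Ico m).image_sdiff_subset hends,
    coe_image_Ico_eq, image_pair, compl_eq_univ_sdiff]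

theorem disjoint_arc_arc (hmM : m < M) (hM : M < m + p) :
    Disjoint (arc p m M) (arc p M (m + p)) :=
  (Ioo_disjoint_Ioo.2 ((min_le_left _ _).trans (le_max_right _ _))).image (injOn_coe_Ico m)
    (fun _ ht => ⟨ht.1.le, ht.2.trans hM⟩) (fun _ ht => ⟨hmM.le.trans ht.1.le, ht.2⟩)

theorem image_arc_subset_or (h : AddCircle p ≃ₜ AddCircle p) (hmM : m < M) (hM : M < m + p)
    (hends : h '' {(m : AddCircle p), ↑M} = {↑m, ↑M}) :
    h '' arc p m M ⊆ arc p m M ∧ h '' arc p M (m + p) ⊆ arc p M (m + p) ∨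
      h '' arc p m M ⊆ arc p M (m + p) ∧ h '' arc p M (m + p) ⊆ arc p m M := by
  set A := arc p m M
  set B := arc p M (m + p)
  have hAB : Disjoint A B := disjoint_arc_arc hmM hM
  have himage : h '' A ∪ h '' B = A ∪ B := by
    rw [← image_union, arc_union_arc hmM hM, image_compl_eq h.bijective, hends]
  have hsplit : ∀ C ⊆ A ∪ B, IsPreconnected C → C ⊆ A ∨ C ⊆ B := fun C hC hCc =>
    hCc.subset_or_subset isOpen_arc isOpen_arc hAB hC
  have hA := hsplit _ (himage ▸ subset_union_left)
    (isPreconnected_arc.image _ h.continuous.continuousOn)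
  have hB := hsplit _ (himage ▸ subset_union_right)
    (isPreconnected_arc.image _ h.continuous.continuousOn)
  obtain ⟨x, hx⟩ := arc_nonempty (p := p) hmM
  obtain ⟨y, hy⟩ := arc_nonempty (p := p) hM
  rcases hA with hA | hA <;> rcases hB with hB | hB
  · exact absurd rfl (hAB.ne_of_mem ((himage ▸ union_subset hA hB) (Or.inr hy)) hy)
  · exact Or.inl ⟨hA, hB⟩
  · exact Or.inr ⟨hA, hB⟩
  · exact absurd rfl (hAB.ne_of_mem hx ((himage ▸ union_subset hA hB) (Or.inl hx)))

theorem exists_fixedPt_mem_or_swap (g : AddCircle p ≃ₜ AddCircle p) {a : ℝ} (hga : g a = a)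
    {L : Set (AddCircle p)} (hL : IsClosed L) (hLne : L.Nonempty) (hgL : g '' L = L)
    (haL : (a : AddCircle p) ∉ L) :
    (∃ x ∈ L, g x = x) ∨ ∃ m M : ℝ, a < m ∧ m < M ∧ M < a + p ∧ (m : AddCircle p) ∈ L ∧
      (M : AddCircle p) ∈ L ∧ g m = M ∧ g M = m := by
  set φ := openPartialHomeomorphCoe p a
  set G := φ.symm ∘ g ∘ φ
  have hLt : L ⊆ φ.target := fun x hx (hxa : x = a) => haL (hxa ▸ hx)
  have hg : MapsTo g (φ '' φ.source) (φ '' φ.source) := by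
    rw [φ.image_source_eq_target]
    intro x (hx : x ≠ a) (hgx : g x = a)
    exact hx (g.injective (hgx.trans hga.symm))
  set S := φ.symm '' L
  have hSsrc : S ⊆ φ.source := φ.symm_image_target_eq_source ▸ image_mono hLt
  have hS : IsCompact S := hL.isCompact.image_of_continuousOn (φ.continuousOn_symm.mono hLt)
  have hGS : G '' S = S := by rw [φ.symm_comp_comp_image_symm_image hLt, hgL]
  have hGg : ∀ t ∈ S, g t = G t := fun t ht =>
    (φ.apply_symm_comp_comp le_rfl hg (hSsrc ht)).symm
  have hSL : ∀ t ∈ S, (t : AddCircle p) ∈ L := by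
    rintro _ ⟨x, hx, rfl⟩
    change φ (φ.symm x) ∈ L
    rwa [φ.right_inv (hLt hx)]
  obtain ⟨M, hM⟩ := hS.exists_isGreatest (hLne.image _)
  obtain ⟨m, hm⟩ := hS.exists_isLeast (hLne.image _)
  rcases (φ.continuousOn_symm_comp_comp le_rfl hg g.continuous).strictMonoOn_of_injOn_Ioo
    (lt_add_of_pos_right a (Fact.out : 0 < p)) (φ.injOn_symm_comp_comp le_rfl hg g.injective)
    with hG | hG
  · have hGM : G M = M := ((hG.monotoneOn.mono hSsrc).map_isGreatest hM).unique (by rwa [hGS])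
    exact Or.inl ⟨M, hSL M hM.1, by rw [hGg M hM.1, hGM]⟩
  · have hGM : G M = m := ((hG.antitoneOn.mono hSsrc).map_isGreatest hM).unique (by rwa [hGS])
    have hGm : G m = M := ((hG.antitoneOn.mono hSsrc).map_isLeast hm).unique (by rwa [hGS])
    rcases (hm.2 hM.1).lt_or_eq with hlt | heq
    · exact Or.inr ⟨m, M, (hSsrc hm.1).1, hlt, (hSsrc hM.1).2, hSL m hm.1, hSL M hM.1,
        by rw [hGg m hm.1, hGm], by rw [hGg M hM.1, hGM]⟩
    · exact Or.inl ⟨M, hSL M hM.1, by rw [hGg M hM.1, hGM, heq]⟩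

theorem exists_common_fixedPt_of_image_arc_subset (f g : AddCircle p ≃ₜ AddCircle p)
    (hrel : ∀ x, g (f x) = f (f (g x))) {a m M : ℝ} (ham : a < m) (hmM : m < M)
    (hM : M < a + p) (hfm : f m = m) (hfM : f M = M) (hgm : g m = M) (hgM : g M = m)
    (hfA : f '' arc p m M ⊆ arc p m M) (hgA : g '' arc p m M ⊆ arc p m M) :
    ∃ x, f x = x ∧ g x = x := by
  set φ := openPartialHomeomorphCoe p a
  have hI : Icc m M ⊆ φ.source := Icc_subset_Ioo ham hM
  have hf : MapsTo f (φ '' Icc m M) (φ '' Icc m M) :=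
    mapsTo_image_coe_Icc hmM.le (by rw [image_pair, hfm, hfM]) hfA
  have hg : MapsTo g (φ '' Icc m M) (φ '' Icc m M) :=
    mapsTo_image_coe_Icc hmM.le (by rw [image_pair, hgm, hgM, pair_comm]) hgA
  set F := φ.symm ∘ f ∘ φ
  set G := φ.symm ∘ g ∘ φ
  have hφm : φ.symm m = m := φ.left_inv (hI (left_mem_Icc.2 hmM.le))
  have hφM : φ.symm M = M := φ.left_inv (hI (right_mem_Icc.2 hmM.le))
  have hF : StrictMonoOn F (Icc m M) :=
    (φ.continuousOn_symm_comp_comp hI hf f.continuous).strictMonoOn_of_injOn_Icc hmM.le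
      (by simp [F, φ, hfm, hfM, hφm, hφM, hmM.le]) (φ.injOn_symm_comp_comp hI hf f.injective)
  have hG : StrictAntiOn G (Icc m M) :=
    (φ.continuousOn_symm_comp_comp hI hg g.continuous).strictAntiOn_of_injOn_Icc hmM.le
      (by simp [G, φ, hgm, hgM, hφm, hφM, hmM.le]) (φ.injOn_symm_comp_comp hI hg g.injective)
  obtain ⟨c, hc, hGc⟩ := exists_mem_Icc_isFixedPt_of_mapsTo
    (φ.continuousOn_symm_comp_comp hI hg g.continuous) hmM.le (φ.mapsTo_symm_comp_comp hI hg)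
  have hgc : g c = c := (φ.apply_symm_comp_comp hI hg hc).symm.trans (congrArg φ hGc)
  have hfc : f c = F c := (φ.apply_symm_comp_comp hI hf hc).symm
  have hFG : F (F c) = G (F c) := by
    change φ.symm (f ((F c : ℝ) : AddCircle p)) = φ.symm (g ((F c : ℝ) : AddCircle p))
    rw [← hfc, hrel, hgc]
  have hFc := hF.isFixedPt_of_strictAntiOn hG hc hGc (φ.mapsTo_symm_comp_comp hI hf hc) hFG
  exact ⟨c, hfc.trans (congrArg _ hFc), hgc⟩

theorem exists_common_fixedPt_of_swap (f g : AddCircle p ≃ₜ AddCircle p)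
    (hrel : ∀ x, g (f x) = f (f (g x))) (hgf : ∃ x, g (f x) = x) {a m M : ℝ} (ham : a < m)
    (hmM : m < M) (hM : M < a + p) (hfm : f m = m) (hfM : f M = M) (hgm : g m = M)
    (hgM : g M = m) (hga : g a = a) : ∃ x, f x = x ∧ g x = x := by
  have hMm : M < m + p := by linarith
  set A := arc p m M
  set B := arc p M (m + p)
  have hAB : Disjoint A B := disjoint_arc_arc hmM hMm
  have haB : (a : AddCircle p) ∈ B := ⟨a + p, ⟨by linarith, by linarith⟩, coe_add_period p a⟩
  obtain ⟨hgA, hgB⟩ : g '' A ⊆ A ∧ g '' B ⊆ B := by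
    refine (image_arc_subset_or g hmM hMm (by rw [image_pair, hgm, hgM, pair_comm])).resolve_right
      fun ⟨_, hgB⟩ => ?_
    exact hAB.ne_of_mem (hgB (mem_image_of_mem g haB)) haB hga
  refine exists_common_fixedPt_of_image_arc_subset f g hrel ham hmM hM hfm hfM hgm hgM ?_ hgA
  -- If `f` swapped the two arcs, so would `g ∘ f`, which then could not have a fixed point.
  refine ((image_arc_subset_or f hmM hMm (by rw [image_pair, hfm, hfM])).resolve_right ?_).1
  rintro ⟨hfA, hfB⟩
  obtain ⟨x, hx⟩ := hgf
  have hx' : x ∈ A ∪ B := by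
    have hmM' : (m : AddCircle p) ≠ M := fun h =>
      hmM.ne (injOn_coe_Ico m ⟨le_rfl, by linarith⟩ ⟨hmM.le, hMm⟩ h)
    rw [arc_union_arc hmM hMm]
    rintro (rfl | rfl)
    · exact hmM' (by rw [← hx, hfm, hgm])
    · exact hmM' (by rw [← hx, hfM, hgM])
  rcases hx' with hxA | hxB
  · exact hAB.ne_of_mem hxA (hgB (mem_image_of_mem g (hfA (mem_image_of_mem f hxA)))) hx.symm
  · exact hAB.ne_of_mem (hgA (mem_image_of_mem g (hfB (mem_image_of_mem f hxB)))) hxB hx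

theorem exists_common_fixedPt (f g : AddCircle p ≃ₜ AddCircle p)
    (hrel : ∀ x, g (f x) = f (f (g x))) (hf : ∃ x, f x = x) (hg : ∃ x, g x = x)
    (hgf : ∃ x, g (f x) = x) : ∃ x, f x = x ∧ g x = x := by
  have hfix : g ⁻¹' {x | f x = x} ⊆ {x | f x = x} := fun x (hx : f (g x) = g x) =>
    g.injective ((hrel x).trans (by rw [hx, hx]))
  obtain ⟨L, hLK, hL, hLne, hgL⟩ := exists_isClosed_subset_image_eq g.continuous g.surjective
    (isClosed_eq f.continuous continuous_id) hf hfix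
  obtain ⟨r, hr⟩ := hg
  by_cases hrL : r ∈ L
  · exact ⟨r, hLK hrL, hr⟩
  obtain ⟨a, rfl⟩ := QuotientAddGroup.mk_surjective r
  rcases exists_fixedPt_mem_or_swap g hr hL hLne hgL hrL with
    ⟨x, hxL, hx⟩ | ⟨m, M, ham, hmM, hM, hmL, hML, hgm, hgM⟩
  · exact ⟨x, hLK hxL, hx⟩
  · exact exists_common_fixedPt_of_swap f g hrel hgf ham hmM hM (hLK hmL) (hLK hML) hgm hgM hr

end AddCircle

open MeasureTheory

theorem common_fixed_point_of_conjugation_relation_general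
    (f g : Equiv.Perm (AddCircle (1 : ℝ)))
    (hfc : Continuous ⇑f) (hgc : Continuous ⇑g)
    (hrel : g * f * g⁻¹ = f ^ 2)
    (rot : Equiv.Perm (AddCircle (1 : ℝ)) → AddCircle (1 : ℝ))
    (hrot_hom : ∀ h₁ h₂, h₁ ∈ Subgroup.closure ({f, g} : Set (Equiv.Perm (AddCircle (1 : ℝ)))) →
      h₂ ∈ Subgroup.closure ({f, g} : Set (Equiv.Perm (AddCircle (1 : ℝ)))) →
      rot (h₁ * h₂) = rot h₁ + rot h₂)
    (hrot_fix : ∀ h ∈ Subgroup.closure ({f, g} : Set (Equiv.Perm (AddCircle (1 : ℝ)))),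
      (rot h = 0 ↔ ∃ x, h x = x))
    (hg0 : rot g = 0) :
    ∃ x : AddCircle (1 : ℝ), f x = x ∧ g x = x := by
  have : Fact ((0 : ℝ) < 1) := ⟨one_pos⟩
  have hfH : f ∈ Subgroup.closure {f, g} := Subgroup.subset_closure (mem_insert f _)
  have hgH : g ∈ Subgroup.closure {f, g} := Subgroup.subset_closure (mem_insert_of_mem f rfl)
  have hf0 : rot f = 0 := apply_eq_zero_of_conj_eq_sq hrot_hom hfH hgH hrel
  have hgf0 : rot (g * f) = 0 := by rw [hrot_hom g f hgH hfH, hg0, hf0, add_zero]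
  have hrel' : ∀ x, g (f x) = f (f (g x)) := fun x => by
    simpa [sq] using Equiv.congr_fun hrel (g x)
  exact AddCircle.exists_common_fixedPt hfc.homeoOfEquivCompactToT2 hgc.homeoOfEquivCompactToT2
    hrel' ((hrot_fix f hfH).1 hf0) ((hrot_fix g hgH).1 hg0)
    ((hrot_fix _ (Subgroup.mul_mem _ hgH hfH)).1 hgf0)

theorem common_fixed_point_of_conjugation_relation
    (f g : Equiv.Perm (AddCircle (1 : ℝ)))
    (hfc : Continuous ⇑f) (hgc : Continuous ⇑g)
    (μ : Measure (AddCircle (1 : ℝ))) [IsProbabilityMeasure μ]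
    (hinv : ∀ h ∈ Subgroup.closure ({f, g} : Set (Equiv.Perm (AddCircle (1 : ℝ)))),
      Measure.map (⇑h) μ = μ)
    (hrel : g * f * g⁻¹ = f ^ 2)
    (rot : Equiv.Perm (AddCircle (1 : ℝ)) → AddCircle (1 : ℝ))
    (hrot_hom : ∀ h₁ h₂, h₁ ∈ Subgroup.closure ({f, g} : Set (Equiv.Perm (AddCircle (1 : ℝ)))) →
      h₂ ∈ Subgroup.closure ({f, g} : Set (Equiv.Perm (AddCircle (1 : ℝ)))) →
      rot (h₁ * h₂) = rot h₁ + rot h₂)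
    (hrot_fix : ∀ h ∈ Subgroup.closure ({f, g} : Set (Equiv.Perm (AddCircle (1 : ℝ)))),
      (rot h = 0 ↔ ∃ x, h x = x))
    (hg0 : rot g = 0) :
    ∃ x : AddCircle (1 : ℝ), f x = x ∧ g x = x :=
  common_fixed_point_of_conjugation_relation_general f g hfc hgc hrel rot hrot_hom hrot_fix hg0
end

section
/- Suppose G acts on ℝ by homeomorphisms and Φ : G → ℝ is the translation-number-type map along a semi-conjugacy α : I → ℝ satisfying α∘a₂ = 2α and α∘a₃ = α ± 1 where a₂, a₃ generate a copy of BS(1,2) preserving an unbounded-to-the-right interval I. Then in the case α∘a₃ = α + 1 one has a₂(x) > a₃(x) > x for all sufficiently large x, and in the case α∘a₃ = α − 1 one has a₂(x) > x > a₃(x) for all sufficiently large x; in both cases the fixed-point set of a₂ is bounded above. -/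
theorem semiconjugacy_dynamics (I : Set ℝ) (hI : ∀ M : ℝ, ∃ x ∈ I, M < x)
    (a₂ a₃ : ℝ → ℝ)
    (h₂m : StrictMonoOn a₂ I) (h₃m : StrictMonoOn a₃ I)
    (h₂bij : Set.BijOn a₂ I I) (h₃bij : Set.BijOn a₃ I I)
    (α : ℝ → ℝ) (hαc : ContinuousOn α I) (hαm : MonotoneOn α I)
    (hαs : α '' I = Set.univ)
    (ε : ℝ) (hε : ε = 1 ∨ ε = -1)
    (hα₂ : ∀ x ∈ I, α (a₂ x) = 2 * α x)
    (hα₃ : ∀ x ∈ I, α (a₃ x) = α x + ε) :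
    ((ε = 1 → ∃ M : ℝ, ∀ x ∈ I, M < x → a₂ x > a₃ x ∧ a₃ x > x) ∧
     (ε = -1 → ∃ M : ℝ, ∀ x ∈ I, M < x → a₂ x > x ∧ x > a₃ x)) ∧
    BddAbove {x : ℝ | x ∈ I ∧ a₂ x = x} := by
  have hsurj : ∀ c : ℝ, ∃ x ∈ I, α x = c := by
    intro c
    have : c ∈ α '' I := hαs ▸ Set.mem_univ c
    obtain ⟨x, hx, hxc⟩ := this
    exact ⟨x, hx, hxc⟩
  have key : ∀ x ∈ I, ∀ y ∈ I, α x < α y → x < y := by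
    intro x hx y hy h
    by_contra hle
    push_neg at hle
    exact absurd (hαm hy hx hle) (not_le.mpr h)
  constructor
  · constructor
    · intro hε1
      obtain ⟨x₀, hx₀I, hx₀⟩ := hsurj 2
      refine ⟨x₀, fun x hxI hxM => ?_⟩
      have hαx : (2:ℝ) ≤ α x := hx₀ ▸ hαm hx₀I hxI hxM.le
      have h2I : a₂ x ∈ I := h₂bij.mapsTo hxI
      have h3I : a₃ x ∈ I := h₃bij.mapsTo hxI
      have e2 := hα₂ x hxI
      have e3 := hα₃ x hxI
      constructor
      · exact key _ h3I _ h2I (by rw [e2, e3, hε1]; linarith)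
      · exact key _ hxI _ h3I (by rw [e3, hε1]; linarith)
    · intro hε1
      obtain ⟨x₀, hx₀I, hx₀⟩ := hsurj 1
      refine ⟨x₀, fun x hxI hxM => ?_⟩
      have hαx : (1:ℝ) ≤ α x := hx₀ ▸ hαm hx₀I hxI hxM.le
      have h2I : a₂ x ∈ I := h₂bij.mapsTo hxI
      have h3I : a₃ x ∈ I := h₃bij.mapsTo hxI
      have e2 := hα₂ x hxI
      have e3 := hα₃ x hxI
      exact ⟨key _ hxI _ h2I (by rw [e2]; linarith),
             key _ h3I _ hxI (by rw [e3, hε1]; linarith)⟩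
  · obtain ⟨x₁, hx₁I, hx₁⟩ := hsurj 1
    refine ⟨x₁, fun x hx => ?_⟩
    obtain ⟨hxI, hfix⟩ := hx
    have h2 := hα₂ x hxI
    rw [hfix] at h2
    have hαx : α x = 0 := by linarith
    by_contra h
    push_neg at h
    have := hαm hx₁I hxI h.le
    rw [hx₁, hαx] at this
    linarith
end
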